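/- arXiv:1407.0555 — 13 statements merged into one kernel-verified Lean document; each statement's English description precedes it below -/
import Mathlib

section
/- The billiard map invariant: if x_{j+1} = x_j - 2((A⁻¹x_j,y_j)/(A⁻¹y_j,y_j))·y_j and y_{j+1} = y_j + 2((A⁻¹x_{j+1},y_{j+1})/(EA⁻²x_{j+1},x_{j+1}))·EA⁻¹x_{j+1}, then (A⁻¹x_{j+1}, y_{j+1}) = (A⁻¹x_j, y_j). -/
open Finset

/-!
With `B u v = (A⁻¹u, v)`, the first step is the `B`-reflection of `x` along `y`, so it flips the
sign of `B(·, y)`: `B(x_{j+1}, y_j) = -B(x_j, y_j)`. The second step adds to `y_j` a multiple of a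
vector `v` with `B(x_{j+1}, v) ≠ 0`, chosen exactly so that `B(x_{j+1}, y_{j+1}) = -B(x_{j+1}, y_j)`.
The two sign flips cancel.
-/

namespace LinearMap.BilinForm

variable {K M : Type*} [Field K] [AddCommGroup M] [Module K M] (B : LinearMap.BilinForm K M)

theorem apply_reflection_left {x y : M} (hy : B y y ≠ 0) :
    B (x - (2 * (B x y / B y y)) • y) y = -B x y := by
  rw [map_sub, map_smul, LinearMap.sub_apply, LinearMap.smul_apply, smul_eq_mul, mul_assoc,
    div_mul_cancel₀ _ hy]
  ring

theorem apply_eq_neg_of_eq_add_smul {x y y' v : M} (hv : B x v ≠ 0)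
    (hy' : y' = y + (2 * (B x y' / B x v)) • v) :
    B x y' = -B x y := by
  have h : B x y' = B x y + 2 * B x y' := by
    conv_lhs => rw [hy']
    rw [map_add, map_smul, smul_eq_mul, mul_assoc, div_mul_cancel₀ _ hv]
  linear_combination -h

end LinearMap.BilinForm

theorem Matrix.toBilin'_diagonal_inv_apply {K ι : Type*} [Field K] [Fintype ι] [DecidableEq ι]
    (a u v : ι → K) :
    Matrix.toBilin' (Matrix.diagonal fun i => (a i)⁻¹) u v = ∑ i, u i * v i / a i := by
  simp only [Matrix.toBilin'_apply', dotProduct, Matrix.mulVec_diagonal]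
  exact sum_congr rfl fun i _ => by ring

theorem billiard_invariant_J_general
    (n : ℕ) (a τ : Fin n → ℝ)
    (x y x' y' : Fin n → ℝ)
    (hyy : ∑ i, y i * y i / a i ≠ 0)
    (hE : ∑ i, τ i * x' i * x' i / (a i * a i) ≠ 0)
    (hstep1 : ∀ i, x' i =
      x i - 2 * ((∑ j, x j * y j / a j) / (∑ j, y j * y j / a j)) * y i)
    (hstep2 : ∀ i, y' i =
      y i + 2 * ((∑ j, x' j * y' j / a j) / (∑ j, τ j * x' j * x' j / (a j * a j)))
        * (τ i * x' i / a i)) :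
    ∑ i, x' i * y' i / a i = ∑ i, x i * y i / a i := by
  set B := Matrix.toBilin' (Matrix.diagonal fun i => (a i)⁻¹)
  have hB : ∀ u v, B u v = ∑ i, u i * v i / a i := Matrix.toBilin'_diagonal_inv_apply a
  set v : Fin n → ℝ := fun i => τ i * x' i / a i
  have hBv : B x' v = ∑ i, τ i * x' i * x' i / (a i * a i) := by
    rw [hB]
    exact sum_congr rfl fun i _ => by ring
  have hx' : x' = x - (2 * (B x y / B y y)) • y := by
    ext i
    simp only [hB, hstep1 i, Pi.sub_apply, Pi.smul_apply, smul_eq_mul]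
  have hy' : y' = y + (2 * (B x' y' / B x' v)) • v := by
    ext i
    rw [hBv, hB, hstep2 i]
    rfl
  rw [← hB, ← hB, LinearMap.BilinForm.apply_eq_neg_of_eq_add_smul B (hBv ▸ hE) hy', hx',
    LinearMap.BilinForm.apply_reflection_left B (hB y y ▸ hyy), neg_neg]

/-- The billiard map invariant: `(A⁻¹x_{j+1}, y_{j+1}) = (A⁻¹x_j, y_j)`. -/
theorem billiard_invariant_J
    (n : ℕ) (a τ : Fin n → ℝ) (ha : ∀ i, a i ≠ 0)
    (hτ : ∀ i, τ i = 1 ∨ τ i = -1)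
    (x y x' y' : Fin n → ℝ)
    (hx : ∑ i, x i * x i / a i = 1)
    (hx' : ∑ i, x' i * x' i / a i = 1)
    (hyy : ∑ i, y i * y i / a i ≠ 0)
    (hE : ∑ i, τ i * x' i * x' i / (a i * a i) ≠ 0)
    (hstep1 : ∀ i, x' i =
      x i - 2 * ((∑ j, x j * y j / a j) / (∑ j, y j * y j / a j)) * y i)
    (hstep2 : ∀ i, y' i =
      y i + 2 * ((∑ j, x' j * y' j / a j) / (∑ j, τ j * x' j * x' j / (a j * a j)))
        * (τ i * x' i / a i)) :
    ∑ i, x' i * y' i / a i = ∑ i, x i * y i / a i :=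
  billiard_invariant_J_general n a τ x y x' y' hyy hE hstep1 hstep2
end

section
/- The billiard map preserves the pseudo-Euclidean kinetic energy: under the billiard mapping, ⟨y_{j+1}, y_{j+1}⟩ = ⟨y_j, y_j⟩. -/
/-!
The second half of the billiard step, `y' = y + ν E A⁻¹ x'`, says that `y' - y` is parallel to
the normal `n = E A⁻¹ x'` and, since `⟨y', n⟩ = (A⁻¹x', y')` and `⟨n, n⟩ = (E A⁻²x', x')`,
that `⟨y', n⟩ = ⟨y, n⟩ + 2 ⟨y', n⟩`, i.e. `⟨y' + y, n⟩ = 0`. Hence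
`⟨y', y'⟩ - ⟨y, y⟩ = ⟨y' - y, y' + y⟩ = 0`: the step is the pseudo-Euclidean reflection in the
hyperplane `n^⊥`, and the argument works for any symmetric bilinear form with `⟨n, n⟩ ≠ 0`.
-/

open Finset

namespace LinearMap.BilinForm

variable {K V : Type*} [Field K] [AddCommGroup V] [Module K V] {B : LinearMap.BilinForm K V}

theorem apply_add_eq_zero_of_eq_add_smul {n y y' : V} (hn : B n n ≠ 0)
    (hy' : y' = y + (2 * (B y' n / B n n)) • n) : B (y' + y) n = 0 := by
  have hy'n : B y' n = B y n + 2 * B y' n := by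
    conv_lhs => rw [hy']
    simp only [map_add, map_smul, LinearMap.add_apply, LinearMap.smul_apply, smul_eq_mul]
    field_simp
  simp only [map_add, LinearMap.add_apply]
  linear_combination -hy'n

theorem IsSymm.apply_self_eq_of_eq_add_smul (hB : B.IsSymm) {n y y' : V} (hn : B n n ≠ 0)
    (hy' : y' = y + (2 * (B y' n / B n n)) • n) : B y' y' = B y y := by
  have hsum := apply_add_eq_zero_of_eq_add_smul hn hy'
  have hdiff : y' - y = (2 * (B y' n / B n n)) • n := sub_eq_of_eq_add' hy'
  have hpolar : B y' y' - B y y = B (y' - y) (y' + y) := by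
    simp only [map_sub, map_add, LinearMap.sub_apply, hB.eq y y']
    ring
  rw [← sub_eq_zero, hpolar, hdiff, map_smul, LinearMap.smul_apply, hB.eq n (y' + y), hsum,
    smul_zero]

end LinearMap.BilinForm

section PseudoEuclidean

variable {K ι : Type*} [Field K] [Fintype ι] [DecidableEq ι]

def pseudoEuclidean (τ : ι → K) : LinearMap.BilinForm K (ι → K) :=
  Matrix.toBilin' (Matrix.diagonal τ)

theorem pseudoEuclidean_apply (τ u v : ι → K) :
    pseudoEuclidean τ u v = ∑ i, τ i * u i * v i := by
  simp only [pseudoEuclidean, Matrix.toBilin'_apply', dotProduct, Matrix.mulVec_diagonal]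
  exact sum_congr rfl fun i _ ↦ by ring

theorem pseudoEuclidean_isSymm (τ : ι → K) : (pseudoEuclidean τ).IsSymm :=
  Matrix.isSymm_toBilin'_iff_isSymm.mpr (Matrix.isSymm_diagonal τ)

theorem pseudoEuclidean_apply_mul {τ : ι → K} (hτ : ∀ i, τ i * τ i = 1) (u w : ι → K) :
    pseudoEuclidean τ u (τ * w) = ∑ i, u i * w i := by
  rw [pseudoEuclidean_apply]
  refine sum_congr rfl fun i _ ↦ ?_
  rw [Pi.mul_apply]
  linear_combination u i * w i * hτ i

end PseudoEuclidean

theorem billiard_preserves_energy_general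
    (n : ℕ) (a τ : Fin n → ℝ)
    (hτ : ∀ i, τ i = 1 ∨ τ i = -1)
    (y x' y' : Fin n → ℝ)
    (hE : ∑ i, τ i * x' i * x' i / (a i * a i) ≠ 0)
    (hstep2 : ∀ i, y' i =
      y i + 2 * ((∑ j, x' j * y' j / a j) / (∑ j, τ j * x' j * x' j / (a j * a j)))
        * (τ i * x' i / a i)) :
    ∑ i, τ i * y' i * y' i = ∑ i, τ i * y i * y i := by
  have hτ_sq : ∀ i, τ i * τ i = 1 := fun i ↦ by rcases hτ i with h | h <;> simp [h]
  set B := pseudoEuclidean τ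
  set normal := τ * (x' / a)
  have hnn : B normal normal = ∑ i, τ i * x' i * x' i / (a i * a i) := by
    rw [pseudoEuclidean_apply_mul hτ_sq]
    exact sum_congr rfl fun i _ ↦ by simp only [normal, Pi.mul_apply, Pi.div_apply]; ring
  have hy'n : B y' normal = ∑ i, x' i * y' i / a i := by
    rw [pseudoEuclidean_apply_mul hτ_sq]
    exact sum_congr rfl fun i _ ↦ by simp only [Pi.div_apply]; ring
  have hreflect : y' = y + (2 * (B y' normal / B normal normal)) • normal := by
    ext i
    rw [hy'n, hnn, hstep2 i]
    simp only [normal, Pi.add_apply, Pi.smul_apply, Pi.mul_apply, Pi.div_apply, smul_eq_mul]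
    ring
  simpa only [B, pseudoEuclidean_apply] using
    (pseudoEuclidean_isSymm τ).apply_self_eq_of_eq_add_smul (hnn ▸ hE) hreflect

/-- The billiard map preserves the pseudo-Euclidean kinetic energy:
`⟨y_{j+1}, y_{j+1}⟩ = ⟨y_j, y_j⟩`. -/
theorem billiard_preserves_energy
    (n : ℕ) (a τ : Fin n → ℝ) (ha : ∀ i, a i ≠ 0)
    (hτ : ∀ i, τ i = 1 ∨ τ i = -1)
    (x y x' y' : Fin n → ℝ)
    (hx : ∑ i, x i * x i / a i = 1)
    (hx' : ∑ i, x' i * x' i / a i = 1)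
    (hyy : ∑ i, y i * y i / a i ≠ 0)
    (hE : ∑ i, τ i * x' i * x' i / (a i * a i) ≠ 0)
    (hstep1 : ∀ i, x' i =
      x i - 2 * ((∑ j, x j * y j / a j) / (∑ j, y j * y j / a j)) * y i)
    (hstep2 : ∀ i, y' i =
      y i + 2 * ((∑ j, x' j * y' j / a j) / (∑ j, τ j * x' j * x' j / (a j * a j)))
        * (τ i * x' i / a i)) :
    ∑ i, τ i * y' i * y' i = ∑ i, τ i * y i * y i :=
  billiard_preserves_energy_general n a τ hτ y x' y' hE hstep2
end

section
/- Partial fraction decomposition of the spectral determinant: for a non-symmetric quadric (τ_i a_i pairwise distinct), q_λ(y,y)(1 + q_λ(x,x)) - q_λ(x,y)² = Σ_{i=1}^n f_i(x,y)/(λ - τ_i a_i), where f_i(x,y) = τ_i y_i² + Σ_{j≠i} (x_i y_j - x_j y_i)²/(τ_j a_i - τ_i a_j). -/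
/-!
With weights `w i = τ i / (λ - τ i a i)`, Lagrange's identity writes
`q_λ(y,y) q_λ(x,x) - q_λ(x,y)²` as `½ Σ_{i,j} w i w j (x i y j - x j y i)²`. Since `τ² = 1`,
each product `w i w j` splits into partial fractions with residue `1 / (τ j a i - τ i a j)` at
`τ i a i`, and symmetrising in `i, j` removes the `½`.
-/

open Finset

theorem two_mul_weighted_lagrange_identity {ι R : Type*} [Fintype ι] [CommRing R]
    (w x y : ι → R) :
    2 * ((∑ i, w i * y i * y i) * (∑ i, w i * x i * x i) - (∑ i, w i * x i * y i) ^ 2) =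
      ∑ i, ∑ j, w i * w j * (x i * y j - x j * y i) ^ 2 := by
  symm
  calc ∑ i, ∑ j, w i * w j * (x i * y j - x j * y i) ^ 2
      = ∑ i, ∑ j, ((w i * y i * y i) * (w j * x j * x j) + (w i * x i * x i) * (w j * y j * y j)
          - 2 * ((w i * x i * y i) * (w j * x j * y j))) :=
        sum_congr rfl fun i _ => sum_congr rfl fun j _ => by ring
    _ = _ := by
      simp only [sum_sub_distrib, sum_add_distrib, ← mul_sum, ← sum_mul]
      ring

theorem sum_sum_add_swap {ι M : Type*} [Fintype ι] [AddCommMonoid M] (f : ι → ι → M) :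
    ∑ i, ∑ j, (f i j + f j i) = 2 • ∑ i, ∑ j, f i j := by
  rw [two_nsmul]
  simp only [sum_add_distrib]
  exact congrArg _ sum_comm

theorem div_mul_div_eq_partial_fractions {K : Type*} [Field K] {l t s a b : K}
    (ht : t ^ 2 = 1) (hs : s ^ 2 = 1) (hla : l ≠ t * a) (hlb : l ≠ s * b) (hab : t * a ≠ s * b) :
    t / (l - t * a) * (s / (l - s * b)) =
      (s * a - t * b)⁻¹ / (l - t * a) + (t * b - s * a)⁻¹ / (l - s * b) := by
  have hsa : s * a - t * b ≠ 0 := fun h =>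
    hab (by linear_combination t * s * h - t * a * hs + s * b * ht)
  have numerators : (s * a - t * b)⁻¹ * ((l - s * b) - (l - t * a)) = t * s := by
    rw [inv_mul_eq_iff_eq_mul₀ hsa]
    linear_combination s * b * ht - t * a * hs
  rw [div_mul_div_comm, div_add_div _ _ (sub_ne_zero.2 hla) (sub_ne_zero.2 hlb),
    ← neg_sub (s * a), inv_neg, ← numerators]
  ring

theorem spectral_det_partial_fractions_general
    (n : ℕ) (a τ : Fin n → ℝ)
    (hτ : ∀ i, τ i = 1 ∨ τ i = -1)
    (hdist : ∀ i j, i ≠ j → τ i * a i ≠ τ j * a j)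
    (x y : Fin n → ℝ) (lam : ℝ) (hlam : ∀ i, lam ≠ τ i * a i) :
    (∑ i, τ i * y i * y i / (lam - τ i * a i)) *
        (1 + ∑ i, τ i * x i * x i / (lam - τ i * a i)) -
      (∑ i, τ i * x i * y i / (lam - τ i * a i)) ^ 2 =
    ∑ i, (τ i * y i ^ 2 +
        ∑ j ∈ univ.erase i, (x i * y j - x j * y i) ^ 2 / (τ j * a i - τ i * a j)) /
      (lam - τ i * a i) := by
  set w : Fin n → ℝ := fun i => τ i / (lam - τ i * a i)
  set h : Fin n → Fin n → ℝ := fun i j =>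
    (x i * y j - x j * y i) ^ 2 / (τ j * a i - τ i * a j) / (lam - τ i * a i)
  have hw : ∀ u v : Fin n → ℝ, ∀ i, τ i * u i * v i / (lam - τ i * a i) = w i * u i * v i :=
    fun u v i => by simp only [w]; ring
  have hsq : ∀ i, τ i ^ 2 = 1 := fun i => by rcases hτ i with h | h <;> simp [h]
  -- the diagonal terms vanish, so the sums over `univ.erase i` may run over all `j`
  have hdiag : ∀ i, h i i = 0 := fun i => by simp only [h]; ring
  have hpair : ∀ i j, w i * w j * (x i * y j - x j * y i) ^ 2 = h i j + h j i := by
    intro i j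
    rcases eq_or_ne i j with rfl | hij
    · rw [hdiag]; ring
    · simp only [w, h]
      rw [div_mul_div_eq_partial_fractions (hsq i) (hsq j) (hlam i) (hlam j) (hdist i j hij)]
      ring
  have hlagrange : (∑ i, w i * y i * y i) * (∑ i, w i * x i * x i) - (∑ i, w i * x i * y i) ^ 2 =
      ∑ i, ∑ j, h i j := by
    have := two_mul_weighted_lagrange_identity w x y
    simp only [hpair, sum_sum_add_swap, nsmul_eq_mul, Nat.cast_ofNat] at this
    exact mul_left_cancel₀ two_ne_zero this
  have hrow : ∀ i, (τ i * y i ^ 2 +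
        ∑ j ∈ univ.erase i, (x i * y j - x j * y i) ^ 2 / (τ j * a i - τ i * a j)) /
      (lam - τ i * a i) = w i * y i * y i + ∑ j, h i j := by
    intro i
    rw [add_div, sum_div, sum_erase _ (hdiag i), sq, ← mul_assoc, hw]
  simp only [hw, hrow, sum_add_distrib, ← hlagrange]
  ring

/-- Partial fraction decomposition of the spectral determinant for a
non-symmetric quadric:
`q_λ(y,y)(1 + q_λ(x,x)) - q_λ(x,y)² = Σ_i f_i(x,y)/(λ - τ_i a_i)`. -/
theorem spectral_det_partial_fractions
    (n : ℕ) (a τ : Fin n → ℝ) (ha : ∀ i, a i ≠ 0)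
    (hτ : ∀ i, τ i = 1 ∨ τ i = -1)
    (hdist : ∀ i j, i ≠ j → τ i * a i ≠ τ j * a j)
    (x y : Fin n → ℝ) (lam : ℝ) (hlam : ∀ i, lam ≠ τ i * a i) :
    (∑ i, τ i * y i * y i / (lam - τ i * a i)) *
        (1 + ∑ i, τ i * x i * x i / (lam - τ i * a i)) -
      (∑ i, τ i * x i * y i / (lam - τ i * a i)) ^ 2 =
    ∑ i, (τ i * y i ^ 2 +
        ∑ j ∈ univ.erase i, (x i * y j - x j * y i) ^ 2 / (τ j * a i - τ i * a j)) /
      (lam - τ i * a i) :=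
  spectral_det_partial_fractions_general n a τ hτ hdist x y lam hlam
end

section
/- The sum of the integrals f_i recovers twice the Hamiltonian: Σ_{i=1}^n f_i(x,y) = ⟨y,y⟩ = Σ_{i=1}^n τ_i y_i², where f_i(x,y) = τ_i y_i² + Σ_{j≠i}(x_i y_j - x_j y_i)²/(τ_j a_i - τ_i a_j). -/
/-! The correction term of `f_i` is antisymmetric under `i ↔ j`: its numerator is symmetric and
its denominator changes sign. So the double sum of the correction terms vanishes. -/

open Finset

theorem Finset.sum_sum_erase_eq_zero_of_antisymm {ι M : Type*} [DecidableEq ι] [AddCommGroup M]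
    (s : Finset ι) (f : ι → ι → M) (hf : ∀ i j, f j i = -f i j) :
    ∑ i ∈ s, ∑ j ∈ s.erase i, f i j = 0 := by
  rw [← sum_finset_product' s.offDiag s (fun i => s.erase i) (fun p => by
    simp only [mem_offDiag, mem_erase]; tauto) (f := f)]
  refine sum_involution (fun p _ => p.swap)
    (fun p _ => by rw [Prod.fst_swap, Prod.snd_swap, hf, neg_add_cancel])
    (fun p hp _ h => (mem_offDiag.1 hp).2.2 (congrArg Prod.snd h))
    (fun p hp => mem_offDiag.2 ⟨(mem_offDiag.1 hp).2.1, (mem_offDiag.1 hp).1,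
      (mem_offDiag.1 hp).2.2.symm⟩)
    fun p _ => p.swap_swap

theorem sum_integrals_eq_hamiltonian_general
    (n : ℕ) (a τ : Fin n → ℝ)
    (x y : Fin n → ℝ) :
    ∑ i, (τ i * y i ^ 2 +
        ∑ j ∈ univ.erase i, (x i * y j - x j * y i) ^ 2 / (τ j * a i - τ i * a j)) =
    ∑ i, τ i * y i ^ 2 := by
  rw [sum_add_distrib, add_eq_left]
  refine sum_sum_erase_eq_zero_of_antisymm _ _ fun i j => ?_
  rw [← div_neg, neg_sub]
  ring

/-- The sum of the integrals `f_i` recovers twice the Hamiltonian: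
`Σ_i f_i(x,y) = ⟨y,y⟩ = Σ_i τ_i y_i²`. -/
theorem sum_integrals_eq_hamiltonian
    (n : ℕ) (a τ : Fin n → ℝ) (ha : ∀ i, a i ≠ 0)
    (hτ : ∀ i, τ i = 1 ∨ τ i = -1)
    (hdist : ∀ i j, i ≠ j → τ i * a i ≠ τ j * a j)
    (x y : Fin n → ℝ) :
    ∑ i, (τ i * y i ^ 2 +
        ∑ j ∈ univ.erase i, (x i * y j - x j * y i) ^ 2 / (τ j * a i - τ i * a j)) =
    ∑ i, τ i * y i ^ 2 :=
  sum_integrals_eq_hamiltonian_general n a τ x y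
end

section
/- The Lax equation for the geodesic flow: if ẋ = y and ẏ = μ·EA⁻¹x with μ = -(A⁻¹y,y)/(EA⁻²x,x), and (A⁻¹x,x) = 1, (A⁻¹x,y) = 0, then d/dt of the matrix L(λ) = [[q_λ(x,y), q_λ(y,y)], [-1 - q_λ(x,x), -q_λ(x,y)]] equals the commutator [L(λ), A(λ)] where A(λ) = [[0, μ/λ], [1, 0]]. -/
/-!
Every entry of `L(λ)` is a value of the symmetric bilinear form `q_λ`, so its derivative comes
from the product rule. Substituting `ẏ = μ E A⁻¹ x` leaves terms `q_λ(E A⁻¹ x, ·)`, which partial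
fractions rewrite as `λ⁻¹ ((A⁻¹ x, ·) + q_λ(x, ·))`; the constraints `(A⁻¹ x, x) = 1` and
`(A⁻¹ x, y) = 0` then produce exactly the entries of `[L(λ), A(λ)]`.
-/

open Finset

section ResolventForm

variable {ι : Type*} [Fintype ι] (τ a : ι → ℝ) (lam : ℝ)

/-- The form `q_λ(u, v) = ((λE - A)⁻¹u, v)` with `E = diag τ`, `A = diag a`. -/
noncomputable def resolventForm (u v : ι → ℝ) : ℝ :=
  ∑ i, τ i * u i * v i / (lam - τ i * a i)

theorem resolventForm_comm (u v : ι → ℝ) :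
    resolventForm τ a lam u v = resolventForm τ a lam v u := by
  unfold resolventForm
  exact sum_congr rfl fun i _ => by ring

theorem resolventForm_smul_left (c : ℝ) (u v : ι → ℝ) :
    resolventForm τ a lam (c • u) v = c * resolventForm τ a lam u v := by
  unfold resolventForm
  rw [mul_sum]
  exact sum_congr rfl fun i _ => by simp only [Pi.smul_apply, smul_eq_mul]; ring

theorem resolventForm_smul_right (c : ℝ) (u v : ι → ℝ) :
    resolventForm τ a lam u (c • v) = c * resolventForm τ a lam u v := by
  rw [resolventForm_comm, resolventForm_smul_left, resolventForm_comm]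

theorem hasDerivAt_resolventForm {u v : ℝ → ι → ℝ} {u' v' : ι → ℝ} {t : ℝ}
    (hu : ∀ i, HasDerivAt (fun s => u s i) (u' i) t)
    (hv : ∀ i, HasDerivAt (fun s => v s i) (v' i) t) :
    HasDerivAt (fun s => resolventForm τ a lam (u s) (v s))
      (resolventForm τ a lam u' (v t) + resolventForm τ a lam (u t) v') t := by
  unfold resolventForm
  rw [← sum_add_distrib]
  refine HasDerivAt.fun_sum fun i _ => ?_
  exact ((((hu i).const_mul (τ i)).fun_mul (hv i)).div_const _).congr_deriv (by ring)

/-- Partial fractions: `E / (A (λ - E A)) = λ⁻¹ (A⁻¹ + E (λ - E A)⁻¹)` because `E² = 1`. -/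
theorem resolventForm_signature_inv_left (hτ : ∀ i, τ i * τ i = 1) (ha : ∀ i, a i ≠ 0)
    (hlam0 : lam ≠ 0) (hlam : ∀ i, lam ≠ τ i * a i) (u v : ι → ℝ) :
    resolventForm τ a lam (fun i => τ i * u i / a i) v =
      (∑ i, u i * v i / a i + resolventForm τ a lam u v) / lam := by
  unfold resolventForm
  rw [← sum_add_distrib, sum_div]
  refine sum_congr rfl fun i _ => ?_
  have hsub : lam - τ i * a i ≠ 0 := sub_ne_zero.2 (hlam i)
  have hai := ha i
  field_simp
  linear_combination u i * v i * lam * hτ i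

end ResolventForm

section GeodesicFlow

variable {ι : Type*} [Fintype ι] (τ a : ι → ℝ) (lam : ℝ) {x y : ℝ → ι → ℝ} {μ t : ℝ}

theorem hasDerivAt_resolventForm_pos_vel (hτ : ∀ i, τ i * τ i = 1) (ha : ∀ i, a i ≠ 0)
    (hlam0 : lam ≠ 0) (hlam : ∀ i, lam ≠ τ i * a i) (hc1 : ∑ i, x t i * x t i / a i = 1)
    (hdx : ∀ i, HasDerivAt (fun s => x s i) (y t i) t)
    (hdy : ∀ i, HasDerivAt (fun s => y s i) (μ * (τ i * x t i / a i)) t) :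
    HasDerivAt (fun s => resolventForm τ a lam (x s) (y s))
      (resolventForm τ a lam (y t) (y t) + μ / lam * (1 + resolventForm τ a lam (x t) (x t))) t := by
  refine (hasDerivAt_resolventForm τ a lam hdx
    (v' := μ • fun i => τ i * x t i / a i) hdy).congr_deriv ?_
  rw [resolventForm_smul_right, resolventForm_comm τ a lam (x t),
    resolventForm_signature_inv_left τ a lam hτ ha hlam0 hlam, hc1]
  ring

theorem hasDerivAt_resolventForm_vel_vel (hτ : ∀ i, τ i * τ i = 1) (ha : ∀ i, a i ≠ 0)
    (hlam0 : lam ≠ 0) (hlam : ∀ i, lam ≠ τ i * a i) (hc2 : ∑ i, x t i * y t i / a i = 0)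
    (hdy : ∀ i, HasDerivAt (fun s => y s i) (μ * (τ i * x t i / a i)) t) :
    HasDerivAt (fun s => resolventForm τ a lam (y s) (y s))
      (2 * (μ / lam) * resolventForm τ a lam (x t) (y t)) t := by
  refine (hasDerivAt_resolventForm τ a lam (u' := μ • fun i => τ i * x t i / a i)
    (v' := μ • fun i => τ i * x t i / a i) hdy hdy).congr_deriv ?_
  rw [resolventForm_comm τ a lam (y t), resolventForm_smul_left,
    resolventForm_signature_inv_left τ a lam hτ ha hlam0 hlam, hc2]
  ring

theorem hasDerivAt_resolventForm_pos_pos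
    (hdx : ∀ i, HasDerivAt (fun s => x s i) (y t i) t) :
    HasDerivAt (fun s => resolventForm τ a lam (x s) (x s))
      (2 * resolventForm τ a lam (x t) (y t)) t := by
  refine (hasDerivAt_resolventForm τ a lam hdx hdx).congr_deriv ?_
  rw [resolventForm_comm τ a lam (y t)]
  ring

end GeodesicFlow

theorem lax_matrix_commutator (p r s m : ℝ) :
    !![p, r; -1 - s, -p] * !![0, m; 1, 0] - !![0, m; 1, 0] * !![p, r; -1 - s, -p] =
      !![r + m * (1 + s), 2 * m * p; -(2 * p), -(r + m * (1 + s))] := by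
  rw [Matrix.mul_fin_two, Matrix.mul_fin_two]
  ext i j
  fin_cases i <;> fin_cases j <;> simp <;> ring

theorem geodesic_lax_equation_general
    (n : ℕ) (a τ : Fin n → ℝ) (ha : ∀ i, a i ≠ 0)
    (hτ : ∀ i, τ i = 1 ∨ τ i = -1)
    (x y : ℝ → Fin n → ℝ) (μ : ℝ → ℝ)
    (hc1 : ∀ t, ∑ i, x t i * x t i / a i = 1)
    (hc2 : ∀ t, ∑ i, x t i * y t i / a i = 0)
    (hdx : ∀ t i, HasDerivAt (fun s => x s i) (y t i) t)
    (hdy : ∀ t i, HasDerivAt (fun s => y s i) (μ t * (τ i * x t i / a i)) t)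
    (lam : ℝ) (hlam0 : lam ≠ 0) (hlam : ∀ i, lam ≠ τ i * a i)
    (L A : ℝ → Matrix (Fin 2) (Fin 2) ℝ)
    (hL : ∀ t, L t =
      !![∑ i, τ i * x t i * y t i / (lam - τ i * a i),
         ∑ i, τ i * y t i * y t i / (lam - τ i * a i);
         -1 - ∑ i, τ i * x t i * x t i / (lam - τ i * a i),
         -∑ i, τ i * x t i * y t i / (lam - τ i * a i)])
    (hA : ∀ t, A t = !![0, μ t / lam; 1, 0]) :
    ∀ t (i j : Fin 2), HasDerivAt (fun s => L s i j) ((L t * A t - A t * L t) i j) t := by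
  intro t i j
  set q := resolventForm τ a lam
  have hL' : ∀ s, L s = !![q (x s) (y s), q (y s) (y s); -1 - q (x s) (x s), -q (x s) (y s)] := hL
  have hτ' : ∀ i, τ i * τ i = 1 := fun i => mul_self_eq_one_iff.2 (hτ i)
  have hxy := hasDerivAt_resolventForm_pos_vel τ a lam hτ' ha hlam0 hlam (hc1 t) (hdx t) (hdy t)
  have hyy := hasDerivAt_resolventForm_vel_vel τ a lam hτ' ha hlam0 hlam (hc2 t) (hdy t)
  have hxx := hasDerivAt_resolventForm_pos_pos τ a lam (hdx t)
  simp only [hL', hA, lax_matrix_commutator]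
  fin_cases i <;> fin_cases j <;>
    simp only [Fin.zero_eta, Fin.mk_one, Fin.isValue, Matrix.of_apply, Matrix.cons_val',
      Matrix.cons_val_zero, Matrix.cons_val_one, Matrix.cons_val_fin_one]
  · exact hxy
  · exact hyy
  · exact hxx.const_sub (-1)
  · exact hxy.fun_neg

/-- The Lax equation `L̇(λ) = [L(λ), A(λ)]` for the geodesic flow on a quadric
in pseudo-Euclidean space. -/
theorem geodesic_lax_equation
    (n : ℕ) (a τ : Fin n → ℝ) (ha : ∀ i, a i ≠ 0)
    (hτ : ∀ i, τ i = 1 ∨ τ i = -1)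
    (x y : ℝ → Fin n → ℝ) (μ : ℝ → ℝ)
    (hμ : ∀ t, μ t = -(∑ i, y t i * y t i / a i) /
      (∑ i, τ i * x t i * x t i / (a i * a i)))
    (hsing : ∀ t, ∑ i, τ i * x t i * x t i / (a i * a i) ≠ 0)
    (hc1 : ∀ t, ∑ i, x t i * x t i / a i = 1)
    (hc2 : ∀ t, ∑ i, x t i * y t i / a i = 0)
    (hdx : ∀ t i, HasDerivAt (fun s => x s i) (y t i) t)
    (hdy : ∀ t i, HasDerivAt (fun s => y s i) (μ t * (τ i * x t i / a i)) t)
    (lam : ℝ) (hlam0 : lam ≠ 0) (hlam : ∀ i, lam ≠ τ i * a i)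
    (L A : ℝ → Matrix (Fin 2) (Fin 2) ℝ)
    (hL : ∀ t, L t =
      !![∑ i, τ i * x t i * y t i / (lam - τ i * a i),
         ∑ i, τ i * y t i * y t i / (lam - τ i * a i);
         -1 - ∑ i, τ i * x t i * x t i / (lam - τ i * a i),
         -∑ i, τ i * x t i * y t i / (lam - τ i * a i)])
    (hA : ∀ t, A t = !![0, μ t / lam; 1, 0]) :
    ∀ t (i j : Fin 2), HasDerivAt (fun s => L s i j) ((L t * A t - A t * L t) i j) t :=
  geodesic_lax_equation_general n a τ ha hτ x y μ hc1 hc2 hdx hdy lam hlam0 hlam L A hL hA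
end

section
/- The determinant det L(λ) = q_λ(y,y)(1 + q_λ(x,x)) - q_λ(x,y)² is constant along the geodesic flow ẋ = y, ẏ = -((A⁻¹y,y)/(EA⁻²x,x))·EA⁻¹x on the quadric (A⁻¹x,x) = 1 with (A⁻¹x,y) = 0. -/
/-!
Write `q(u, v) = ∑ τᵢ uᵢ vᵢ / (λ - τᵢ aᵢ)` and `w = EA⁻¹x`, so that `ẏ = μ w`.
Since `q` is a symmetric bilinear form, differentiating
`det L = q(y,y)(1 + q(x,x)) - q(x,y)²` along the flow leaves only the terms containing `μ`:
`(det L)' = 2μ (q(y,w)(1 + q(x,x)) - q(x,y) q(x,w))`, whatever `μ` is.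
The partial fraction `λ / (aᵢ(λ - τᵢaᵢ)) = 1/aᵢ + τᵢ/(λ - τᵢaᵢ)` gives
`λ q(u, w) = (A⁻¹u, x) + q(u, x)`, so on the quadric `λ q(x,w) = 1 + q(x,x)` and
`λ q(y,w) = q(x,y)`; hence the bracket vanishes.
-/

open Finset

namespace ConfocalQuadric

variable {ι : Type*} [Fintype ι]

/-- The form `q_λ(u, v) = (E(λ - EA)⁻¹u, v)`. -/
noncomputable def confocalForm (τ a : ι → ℝ) (lam : ℝ) (u v : ι → ℝ) : ℝ :=
  ∑ i, τ i * u i * v i / (lam - τ i * a i)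

/-- The form `(A⁻¹u, v)` defining the quadric. -/
noncomputable def quadricForm (a : ι → ℝ) (u v : ι → ℝ) : ℝ :=
  ∑ i, u i * v i / a i

section confocalForm

variable (τ a : ι → ℝ) (lam : ℝ)

theorem confocalForm_comm (u v : ι → ℝ) :
    confocalForm τ a lam u v = confocalForm τ a lam v u := by
  unfold confocalForm
  exact sum_congr rfl fun i _ => by ring

theorem confocalForm_const_mul_right (u w : ι → ℝ) (c : ℝ) :
    confocalForm τ a lam u (fun i => c * w i) = c * confocalForm τ a lam u w := by
  unfold confocalForm
  rw [mul_sum]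
  exact sum_congr rfl fun i _ => by ring

theorem hasDerivAt_confocalForm {u v : ℝ → ι → ℝ} {u' v' : ι → ℝ} {t : ℝ}
    (hu : ∀ i, HasDerivAt (fun s => u s i) (u' i) t)
    (hv : ∀ i, HasDerivAt (fun s => v s i) (v' i) t) :
    HasDerivAt (fun s => confocalForm τ a lam (u s) (v s))
      (confocalForm τ a lam u' (v t) + confocalForm τ a lam (u t) v') t := by
  unfold confocalForm
  rw [← sum_add_distrib]
  refine HasDerivAt.fun_sum fun i _ =>
    ((((hu i).const_mul (τ i)).mul (hv i)).div_const _).congr_deriv ?_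
  ring

theorem hasDerivAt_detL {x y : ℝ → ι → ℝ} {w : ι → ℝ} {c t : ℝ}
    (hx : ∀ i, HasDerivAt (fun s => x s i) (y t i) t)
    (hy : ∀ i, HasDerivAt (fun s => y s i) (c * w i) t) :
    HasDerivAt (fun s => confocalForm τ a lam (y s) (y s) *
        (1 + confocalForm τ a lam (x s) (x s)) - confocalForm τ a lam (x s) (y s) ^ 2)
      (2 * c * (confocalForm τ a lam (y t) w * (1 + confocalForm τ a lam (x t) (x t)) -
        confocalForm τ a lam (x t) (y t) * confocalForm τ a lam (x t) w)) t := by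
  have hyy := hasDerivAt_confocalForm τ a lam hy hy
  have hxx := hasDerivAt_confocalForm τ a lam hx hx
  have hxy := hasDerivAt_confocalForm τ a lam hx hy
  rw [confocalForm_const_mul_right, confocalForm_comm τ a lam (fun i => c * w i),
    confocalForm_const_mul_right] at hyy
  rw [confocalForm_comm τ a lam (y t) (x t)] at hxx
  rw [confocalForm_const_mul_right] at hxy
  refine ((hyy.mul (hxx.const_add 1)).sub (hxy.pow 2)).congr_deriv ?_
  simp only [Nat.cast_ofNat]
  ring

variable {τ a lam}

theorem lam_mul_confocalForm_signed_inv (hτ : ∀ i, τ i * τ i = 1) (ha : ∀ i, a i ≠ 0)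
    (hlam : ∀ i, lam ≠ τ i * a i) (u x : ι → ℝ) :
    lam * confocalForm τ a lam u (fun i => τ i * x i / a i) =
      quadricForm a x u + confocalForm τ a lam x u := by
  unfold confocalForm quadricForm
  rw [mul_sum, ← sum_add_distrib]
  refine sum_congr rfl fun i _ => ?_
  have hd : lam - τ i * a i ≠ 0 := sub_ne_zero.mpr (hlam i)
  field_simp [ha i]
  linear_combination lam * u i * x i * hτ i

theorem confocalForm_bracket_eq_zero (hτ : ∀ i, τ i * τ i = 1) (ha : ∀ i, a i ≠ 0)
    (hlam : ∀ i, lam ≠ τ i * a i) {x y : ι → ℝ}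
    (hxx : quadricForm a x x = 1) (hxy : quadricForm a x y = 0) :
    confocalForm τ a lam y (fun i => τ i * x i / a i) * (1 + confocalForm τ a lam x x) -
      confocalForm τ a lam x y * confocalForm τ a lam x (fun i => τ i * x i / a i) = 0 := by
  have hx := lam_mul_confocalForm_signed_inv hτ ha hlam x x
  have hy := lam_mul_confocalForm_signed_inv hτ ha hlam y x
  rw [hxx] at hx
  rw [hxy, zero_add] at hy
  rcases eq_or_ne lam 0 with rfl | hlam0
  · rw [zero_mul] at hx hy
    rw [← hx, ← hy]
    ring
  · refine (mul_right_inj' hlam0).mp ?_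
    linear_combination (1 + confocalForm τ a lam x x) * hy - confocalForm τ a lam x y * hx

end confocalForm

end ConfocalQuadric

open ConfocalQuadric in
theorem geodesic_detL_constant_general
    (n : ℕ) (a τ : Fin n → ℝ) (ha : ∀ i, a i ≠ 0)
    (hτ : ∀ i, τ i = 1 ∨ τ i = -1)
    (x y : ℝ → Fin n → ℝ) (μ : ℝ → ℝ)
    (hc1 : ∀ t, ∑ i, x t i * x t i / a i = 1)
    (hc2 : ∀ t, ∑ i, x t i * y t i / a i = 0)
    (hdx : ∀ t i, HasDerivAt (fun s => x s i) (y t i) t)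
    (hdy : ∀ t i, HasDerivAt (fun s => y s i) (μ t * (τ i * x t i / a i)) t)
    (lam : ℝ) (hlam : ∀ i, lam ≠ τ i * a i) :
    ∀ t₁ t₂ : ℝ,
      (∑ i, τ i * y t₁ i * y t₁ i / (lam - τ i * a i)) *
          (1 + ∑ i, τ i * x t₁ i * x t₁ i / (lam - τ i * a i)) -
        (∑ i, τ i * x t₁ i * y t₁ i / (lam - τ i * a i)) ^ 2 =
      (∑ i, τ i * y t₂ i * y t₂ i / (lam - τ i * a i)) *
          (1 + ∑ i, τ i * x t₂ i * x t₂ i / (lam - τ i * a i)) -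
        (∑ i, τ i * x t₂ i * y t₂ i / (lam - τ i * a i)) ^ 2 := by
  have hτ_sq : ∀ i, τ i * τ i = 1 := fun i => by rcases hτ i with h | h <;> norm_num [h]
  have hderiv : ∀ t, HasDerivAt (fun s => confocalForm τ a lam (y s) (y s) *
      (1 + confocalForm τ a lam (x s) (x s)) - confocalForm τ a lam (x s) (y s) ^ 2) 0 t :=
    fun t => (hasDerivAt_detL τ a lam (hdx t) (hdy t)).congr_deriv (by
      rw [confocalForm_bracket_eq_zero hτ_sq ha hlam (hc1 t) (hc2 t), mul_zero])
  exact is_const_of_deriv_eq_zero (fun t => (hderiv t).differentiableAt)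
    (fun t => (hderiv t).deriv)

/-- `det L(λ) = q_λ(y,y)(1 + q_λ(x,x)) - q_λ(x,y)²` is constant along the
geodesic flow on the quadric. -/
theorem geodesic_detL_constant
    (n : ℕ) (a τ : Fin n → ℝ) (ha : ∀ i, a i ≠ 0)
    (hτ : ∀ i, τ i = 1 ∨ τ i = -1)
    (x y : ℝ → Fin n → ℝ) (μ : ℝ → ℝ)
    (hμ : ∀ t, μ t = -(∑ i, y t i * y t i / a i) /
      (∑ i, τ i * x t i * x t i / (a i * a i)))
    (hsing : ∀ t, ∑ i, τ i * x t i * x t i / (a i * a i) ≠ 0)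
    (hc1 : ∀ t, ∑ i, x t i * x t i / a i = 1)
    (hc2 : ∀ t, ∑ i, x t i * y t i / a i = 0)
    (hdx : ∀ t i, HasDerivAt (fun s => x s i) (y t i) t)
    (hdy : ∀ t i, HasDerivAt (fun s => y s i) (μ t * (τ i * x t i / a i)) t)
    (lam : ℝ) (hlam : ∀ i, lam ≠ τ i * a i) :
    ∀ t₁ t₂ : ℝ,
      (∑ i, τ i * y t₁ i * y t₁ i / (lam - τ i * a i)) *
          (1 + ∑ i, τ i * x t₁ i * x t₁ i / (lam - τ i * a i)) -
        (∑ i, τ i * x t₁ i * y t₁ i / (lam - τ i * a i)) ^ 2 =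
      (∑ i, τ i * y t₂ i * y t₂ i / (lam - τ i * a i)) *
          (1 + ∑ i, τ i * x t₂ i * x t₂ i / (lam - τ i * a i)) -
        (∑ i, τ i * x t₂ i * y t₂ i / (lam - τ i * a i)) ^ 2 :=
  geodesic_detL_constant_general n a τ ha hτ x y μ hc1 hc2 hdx hdy lam hlam
end

section
/- The discrete Lax equation for the billiard: for trajectories of the billiard map, L_{x_{j+1},y_{j+1}}(λ) = A_j(λ) L_{x_j,y_j}(λ) A_j(λ)⁻¹, where L_{x,y}(λ) = [[q_λ(x,y), q_λ(y,y)], [-1-q_λ(x,x), -q_λ(x,y)]] and A_j(λ) = [[I_j λ + 2 J_j ν_j, -I_j ν_j], [-2 J_j λ, I_j λ]], with J_j = (A⁻¹x_j,y_j), I_j = -(A⁻¹y_j,y_j), ν_j = 2J_j/(EA⁻²x_{j+1},x_{j+1}). -/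
/-!
A billiard step factors into a shear `x ↦ x' = x + c y` with `c = 2J/I`, followed by a kick
`y ↦ y' = y + ν E A⁻¹ x'`. Conjugating the Lax matrix by `!![1, 0; -c, 1]` reproduces the effect of
the shear on the values of `q_λ`. For the kick, the partial fraction identity
`E (λ - E A)⁻¹ · E A⁻¹ = λ⁻¹ (A⁻¹ + E (λ - E A)⁻¹)`, together with `(A⁻¹x', x') = 1` and
`2 (A⁻¹x', y) + ν (E A⁻² x', x') = 0` (the latter from `(A⁻¹x', y) = -J`), shows that the kick
amounts to conjugating by `!![1, -ν/λ; 0, 1]`. Finally `A_j(λ)` is `I λ` times the product of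
these two matrices.
-/

open Finset Matrix

section LaxMatrix

variable {R : Type*} [CommRing R]

/-- `L_{x,y}(λ)` as a function of `q_λ(x,x)`, `q_λ(x,y)`, `q_λ(y,y)`. -/
def billiardLax (qxx qxy qyy : R) : Matrix (Fin 2) (Fin 2) R :=
  !![qxy, qyy; -1 - qxx, -qxy]

theorem billiardLax_mul_lower_shear (qxx qxy qyy c : R) :
    billiardLax (qxx + 2 * c * qxy + c ^ 2 * qyy) (qxy + c * qyy) qyy * !![1, 0; -c, 1] =
      !![1, 0; -c, 1] * billiardLax qxx qxy qyy := by
  simp only [billiardLax, mul_fin_two]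
  ring_nf

theorem billiardLax_mul_upper_shear (qxx qxy qyy s : R) :
    billiardLax qxx (qxy + s * (1 + qxx)) (qyy + 2 * s * qxy + s ^ 2 * (1 + qxx)) *
        !![1, -s; 0, 1] =
      !![1, -s; 0, 1] * billiardLax qxx qxy qyy := by
  simp only [billiardLax, mul_fin_two]
  ring_nf

end LaxMatrix

theorem billiardMatrix_eq_smul_shears {K : Type*} [Field K] {I J ν lam : K} (hI : I ≠ 0)
    (hlam : lam ≠ 0) :
    !![I * lam + 2 * J * ν, -I * ν; -2 * J * lam, I * lam] =
      (I * lam) • (!![1, -(ν / lam); 0, 1] * !![1, 0; -(2 * J / I), 1]) := by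
  ext i j
  fin_cases i <;> fin_cases j <;> simp <;> field_simp

theorem resolvent_partial_fraction {K : Type*} [Field K] {τ a lam : K} (hτ : τ ^ 2 = 1)
    (ha : a ≠ 0) (hlam : lam ≠ 0) (hd : lam - τ * a ≠ 0) :
    τ / (lam - τ * a) * (τ / a) = lam⁻¹ * (a⁻¹ + τ / (lam - τ * a)) := by
  field_simp
  linear_combination lam * hτ

section WeightedDotProduct

/-! `(w * u) ⬝ᵥ v = ∑ i, w i * u i * v i` is the diagonal bilinear form with weights `w`. -/

variable {ι K : Type*} [Fintype ι] [Field K]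

theorem mul_dotProduct_comm (w u v : ι → K) : (w * u) ⬝ᵥ v = (w * v) ⬝ᵥ u :=
  sum_congr rfl fun _ _ => by simp only [Pi.mul_apply]; ring

theorem mul_dotProduct_mul (w u d v : ι → K) : (w * u) ⬝ᵥ (d * v) = (w * d * u) ⬝ᵥ v :=
  sum_congr rfl fun _ _ => by simp only [Pi.mul_apply]; ring

theorem mul_add_smul_dotProduct (w x y : ι → K) (c : K) :
    (w * (x + c • y)) ⬝ᵥ y = (w * x) ⬝ᵥ y + c * (w * y) ⬝ᵥ y := by
  simp [mul_add, add_dotProduct, smul_dotProduct]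

theorem mul_add_smul_dotProduct_self (w x y : ι → K) (c : K) :
    (w * (x + c • y)) ⬝ᵥ (x + c • y) =
      (w * x) ⬝ᵥ x + 2 * c * (w * x) ⬝ᵥ y + c ^ 2 * (w * y) ⬝ᵥ y := by
  simp only [mul_add, mul_smul_comm, add_dotProduct, dotProduct_add, smul_dotProduct,
    dotProduct_smul, smul_eq_mul, mul_dotProduct_comm w y x]
  ring

variable {Q P D : ι → K} {lam : K} (hQD : Q * D = lam⁻¹ • (P + Q))
include hQD

theorem resolvent_dotProduct_mul (u v : ι → K) :
    (Q * u) ⬝ᵥ (D * v) = lam⁻¹ * ((P * u) ⬝ᵥ v + (Q * u) ⬝ᵥ v) := by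
  rw [mul_dotProduct_mul, hQD]
  simp only [smul_mul_assoc, add_mul, add_dotProduct, smul_dotProduct, smul_eq_mul, mul_add]

theorem resolvent_dotProduct_add_smul {x : ι → K} (hx : (P * x) ⬝ᵥ x = 1) (y : ι → K) (ν : K) :
    (Q * x) ⬝ᵥ (y + ν • (D * x)) = (Q * x) ⬝ᵥ y + ν / lam * (1 + (Q * x) ⬝ᵥ x) := by
  rw [dotProduct_add, dotProduct_smul, resolvent_dotProduct_mul hQD, hx, smul_eq_mul]
  ring

theorem resolvent_dotProduct_add_smul_self {x y : ι → K} {ν : K} (hx : (P * x) ⬝ᵥ x = 1)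
    (hxy : 2 * (P * x) ⬝ᵥ y + ν * (P * D * x) ⬝ᵥ x = 0) :
    (Q * (y + ν • (D * x))) ⬝ᵥ (y + ν • (D * x)) =
      (Q * y) ⬝ᵥ y + 2 * (ν / lam) * (Q * x) ⬝ᵥ y + (ν / lam) ^ 2 * (1 + (Q * x) ⬝ᵥ x) := by
  have hDD : (Q * (D * x)) ⬝ᵥ (D * x) =
      lam⁻¹ * (P * D * x) ⬝ᵥ x + lam⁻¹ ^ 2 * (1 + (Q * x) ⬝ᵥ x) := by
    rw [resolvent_dotProduct_mul hQD, ← mul_assoc, mul_dotProduct_comm Q (D * x),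
      resolvent_dotProduct_mul hQD, hx]
    ring
  rw [mul_add_smul_dotProduct_self, resolvent_dotProduct_mul hQD, hDD, mul_dotProduct_comm P y x,
    mul_dotProduct_comm Q y x]
  linear_combination ν / lam * hxy

theorem billiardLax_step_mul {x y x' y' : ι → K} {c ν : K} (hx' : x' = x + c • y)
    (hy' : y' = y + ν • (D * x')) (hPx' : (P * x') ⬝ᵥ x' = 1)
    (hxy : 2 * (P * x') ⬝ᵥ y + ν * (P * D * x') ⬝ᵥ x' = 0) :
    billiardLax ((Q * x') ⬝ᵥ x') ((Q * x') ⬝ᵥ y') ((Q * y') ⬝ᵥ y') *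
        (!![1, -(ν / lam); 0, 1] * !![1, 0; -c, 1]) =
      (!![1, -(ν / lam); 0, 1] * !![1, 0; -c, 1]) *
        billiardLax ((Q * x) ⬝ᵥ x) ((Q * x) ⬝ᵥ y) ((Q * y) ⬝ᵥ y) := by
  have kick : billiardLax ((Q * x') ⬝ᵥ x') ((Q * x') ⬝ᵥ y') ((Q * y') ⬝ᵥ y') *
      !![1, -(ν / lam); 0, 1] =
        !![1, -(ν / lam); 0, 1] * billiardLax ((Q * x') ⬝ᵥ x') ((Q * x') ⬝ᵥ y) ((Q * y) ⬝ᵥ y) := by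
    rw [hy', resolvent_dotProduct_add_smul hQD hPx', resolvent_dotProduct_add_smul_self hQD hPx' hxy]
    exact billiardLax_mul_upper_shear _ _ _ _
  have shear : billiardLax ((Q * x') ⬝ᵥ x') ((Q * x') ⬝ᵥ y) ((Q * y) ⬝ᵥ y) * !![1, 0; -c, 1] =
      !![1, 0; -c, 1] * billiardLax ((Q * x) ⬝ᵥ x) ((Q * x) ⬝ᵥ y) ((Q * y) ⬝ᵥ y) := by
    rw [hx', mul_add_smul_dotProduct_self, mul_add_smul_dotProduct]
    exact billiardLax_mul_lower_shear _ _ _ _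
  rw [← mul_assoc, kick, mul_assoc, shear, mul_assoc]

end WeightedDotProduct

theorem billiard_discrete_lax_general
    (n : ℕ) (a τ : Fin n → ℝ) (ha : ∀ i, a i ≠ 0)
    (hτ : ∀ i, τ i = 1 ∨ τ i = -1)
    (x y x' y' : Fin n → ℝ)
    (hx' : ∑ i, x' i * x' i / a i = 1)
    (J I ν : ℝ)
    (hJ : J = ∑ i, x i * y i / a i)
    (hI : I = -∑ i, y i * y i / a i) (hI0 : I ≠ 0)
    (hD : ∑ i, τ i * x' i * x' i / (a i * a i) ≠ 0)
    (hν : ν = 2 * J / (∑ i, τ i * x' i * x' i / (a i * a i)))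
    (hstep1 : ∀ i, x' i = x i - 2 * (J / (∑ j, y j * y j / a j)) * y i)
    (hstep2 : ∀ i, y' i = y i + ν * (τ i * x' i / a i))
    (lam : ℝ) (hlam0 : lam ≠ 0) (hlam : ∀ i, lam ≠ τ i * a i)
    (q : (Fin n → ℝ) → (Fin n → ℝ) → ℝ)
    (hq : ∀ u v, q u v = ∑ i, τ i * u i * v i / (lam - τ i * a i))
    (L L' A : Matrix (Fin 2) (Fin 2) ℝ)
    (hL : L = !![q x y, q y y; -1 - q x x, -q x y])
    (hL' : L' = !![q x' y', q y' y'; -1 - q x' x', -q x' y'])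
    (hA : A = !![I * lam + 2 * J * ν, -I * ν; -2 * J * lam, I * lam])
    (hAdet : A.det ≠ 0) :
    L' = A * L * A⁻¹ := by
  -- the diagonal matrices `A⁻¹`, `E A⁻¹` and `E (λ - E A)⁻¹`
  set P : Fin n → ℝ := fun i => (a i)⁻¹
  set D : Fin n → ℝ := fun i => τ i / a i
  set Q : Fin n → ℝ := fun i => τ i / (lam - τ i * a i)
  have hQD : Q * D = lam⁻¹ • (P + Q) := funext fun i =>
    resolvent_partial_fraction (by rcases hτ i with h | h <;> simp [h]) (ha i) hlam0
      (sub_ne_zero.mpr (hlam i))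
  have hq' : ∀ u v, q u v = (Q * u) ⬝ᵥ v := fun u v =>
    (hq u v).trans (sum_congr rfl fun i _ => by simp only [Pi.mul_apply, Q]; ring)
  have hP : ∀ u v, (P * u) ⬝ᵥ v = ∑ i, u i * v i / a i := fun u v =>
    sum_congr rfl fun i _ => by simp only [Pi.mul_apply, P]; ring
  have hyy : ∑ j, y j * y j / a j = -I := by rw [hI, neg_neg]
  have hshear : x' = x + (2 * J / I) • y := funext fun i => by
    rw [hstep1 i, hyy]; simp only [Pi.add_apply, Pi.smul_apply, smul_eq_mul]; ring
  have hkick : y' = y + ν • (D * x') := funext fun i => by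
    rw [hstep2 i]; simp only [Pi.add_apply, Pi.smul_apply, Pi.mul_apply, smul_eq_mul, D]; ring
  have hPx'y : (P * x') ⬝ᵥ y = -J := by
    rw [hshear, mul_add_smul_dotProduct, hP, hP, ← hJ, hyy]
    field_simp
    ring
  have hνR : ν * (P * D * x') ⬝ᵥ x' = 2 * J := by
    have hR : (P * D * x') ⬝ᵥ x' = ∑ i, τ i * x' i * x' i / (a i * a i) :=
      sum_congr rfl fun i _ => by simp only [Pi.mul_apply, P, D]; ring
    rw [hR, hν, div_mul_cancel₀ _ hD]
  have hstep := billiardLax_step_mul hQD hshear hkick ((hP x' x').trans hx')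
    (by rw [hPx'y, hνR]; ring)
  simp only [billiardLax, ← hq'] at hstep
  have key : L' * A = A * L := by
    rw [hL', hL, hA, billiardMatrix_eq_smul_shears hI0 hlam0, Matrix.mul_smul, Matrix.smul_mul,
      hstep]
  rw [← key, Matrix.mul_nonsing_inv_cancel_right _ _ (isUnit_iff_ne_zero.mpr hAdet)]

/-- The discrete Lax equation for the billiard map:
`L_{x_{j+1},y_{j+1}}(λ) = A_j(λ) L_{x_j,y_j}(λ) A_j(λ)⁻¹`. -/
theorem billiard_discrete_lax
    (n : ℕ) (a τ : Fin n → ℝ) (ha : ∀ i, a i ≠ 0)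
    (hτ : ∀ i, τ i = 1 ∨ τ i = -1)
    (x y x' y' : Fin n → ℝ)
    (hx : ∑ i, x i * x i / a i = 1)
    (hx' : ∑ i, x' i * x' i / a i = 1)
    (J I ν : ℝ)
    (hJ : J = ∑ i, x i * y i / a i) (hJ0 : J ≠ 0)
    (hI : I = -∑ i, y i * y i / a i) (hI0 : I ≠ 0)
    (hD : ∑ i, τ i * x' i * x' i / (a i * a i) ≠ 0)
    (hν : ν = 2 * J / (∑ i, τ i * x' i * x' i / (a i * a i)))
    (hstep1 : ∀ i, x' i = x i - 2 * (J / (∑ j, y j * y j / a j)) * y i)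
    (hstep2 : ∀ i, y' i = y i + ν * (τ i * x' i / a i))
    (lam : ℝ) (hlam0 : lam ≠ 0) (hlam : ∀ i, lam ≠ τ i * a i)
    (q : (Fin n → ℝ) → (Fin n → ℝ) → ℝ)
    (hq : ∀ u v, q u v = ∑ i, τ i * u i * v i / (lam - τ i * a i))
    (L L' A : Matrix (Fin 2) (Fin 2) ℝ)
    (hL : L = !![q x y, q y y; -1 - q x x, -q x y])
    (hL' : L' = !![q x' y', q y' y'; -1 - q x' x', -q x' y'])
    (hA : A = !![I * lam + 2 * J * ν, -I * ν; -2 * J * lam, I * lam])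
    (hAdet : A.det ≠ 0) :
    L' = A * L * A⁻¹ :=
  billiard_discrete_lax_general n a τ ha hτ x y x' y' hx' J I ν hJ hI hI0 hD hν hstep1 hstep2 lam
    hlam0 hlam q hq L L' A hL hL' hA hAdet
end

section
/- As a corollary of the discrete Lax representation, det L_{x,y}(λ) = q_λ(y,y)(1+q_λ(x,x)) - q_λ(x,y)² is an invariant of the billiard map: det L_{x_{j+1},y_{j+1}}(λ) = det L_{x_j,y_j}(λ) for all admissible λ. -/
open Finset
open LinearMap (BilinForm mk₂)

/-!
Both half-steps of the billiard map are shears. The first, `x' = x - c y`, preserves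
`q(y,y)(1 + q(x,x)) - q(x,y)²` for every symmetric form `q`. For the second,
`y' = y + s w` with `w = EA⁻¹x'`, the resolvent identity `λ q_λ(u, w) = (A⁻¹x', u) + q_λ(x', u)`
together with `(A⁻¹x', x') = 1` turns the change of the determinant into
`s q_λ(x', w) ((A⁻¹x', y) + (A⁻¹x', y'))`, and this vanishes because `y'` is the reflection of `y`
in the tangent hyperplane at `x'`.
-/

section LaxDeterminant

variable {R M : Type*} [CommRing R] [AddCommGroup M] [Module R M]

/-- `det L_{x,y}(λ)` when `B = q_λ`. -/
def laxDet (B : BilinForm R M) (x y : M) : R := B y y * (1 + B x x) - B x y ^ 2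

theorem laxDet_sub_smul {B : BilinForm R M} (hB : B.IsSymm) (x y : M) (t : R) :
    laxDet B (x - t • y) y = laxDet B x y := by
  simp only [laxDet, map_sub, map_smul, LinearMap.sub_apply, LinearMap.smul_apply, smul_eq_mul,
    hB.eq y x]
  ring

theorem laxDet_add_smul {B : BilinForm R M} (hB : B.IsSymm) (ℓ : M →ₗ[R] R) {lam : R}
    {x w : M} (hw : ∀ u, lam * B u w = ℓ u + B x u) (hx : ℓ x = 1) (y : M) (s : R) :
    laxDet B x (y + s • w) = laxDet B x y + s * B x w * (ℓ y + ℓ (y + s • w)) := by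
  have hxw : lam * B x w = 1 + B x x := hx ▸ hw x
  simp only [laxDet, map_add, map_smul, LinearMap.add_apply, LinearMap.smul_apply, smul_eq_mul,
    hB.eq w y]
  linear_combination (2 * s * B x w) * hw y - (2 * s * B y w + s ^ 2 * B w w) * hxw
    + (s ^ 2 * B x w) * hw w

end LaxDeterminant

theorem LinearMap.apply_add_apply_eq_zero_of_eq_add_smul {K M : Type*} [Field K]
    [AddCommGroup M] [Module K M] (ℓ : M →ₗ[K] K) {y y' w : M} (hw : ℓ w ≠ 0)
    (h : y' = y + (2 * (ℓ y' / ℓ w)) • w) : ℓ y + ℓ y' = 0 := by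
  have := congrArg ℓ h
  rw [map_add, map_smul, smul_eq_mul, mul_assoc, div_mul_cancel₀ _ hw] at this
  linear_combination -this

section Quadric

variable {ι K : Type*} [Fintype ι] [Field K]

/-- `(A⁻¹u, v)` for `A = diag a`. -/
def invForm (a : ι → K) : BilinForm K (ι → K) :=
  mk₂ K (fun u v => ∑ i, u i * v i / a i)
    (fun u u' v => by simp only [Pi.add_apply, add_mul, add_div, sum_add_distrib])
    (fun c u v => by simp only [Pi.smul_apply, smul_eq_mul, mul_sum]; congr 1; ext i; ring)
    (fun u v v' => by simp only [Pi.add_apply, mul_add, add_div, sum_add_distrib])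
    (fun c u v => by simp only [Pi.smul_apply, smul_eq_mul, mul_sum]; congr 1; ext i; ring)

theorem invForm_apply (a u v : ι → K) : invForm a u v = ∑ i, u i * v i / a i := rfl

def qForm (a τ : ι → K) (lam : K) : BilinForm K (ι → K) :=
  mk₂ K (fun u v => ∑ i, τ i * u i * v i / (lam - τ i * a i))
    (fun u u' v => by simp only [Pi.add_apply, mul_add, add_mul, add_div, sum_add_distrib])
    (fun c u v => by simp only [Pi.smul_apply, smul_eq_mul, mul_sum]; congr 1; ext i; ring)
    (fun u v v' => by simp only [Pi.add_apply, mul_add, add_div, sum_add_distrib])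
    (fun c u v => by simp only [Pi.smul_apply, smul_eq_mul, mul_sum]; congr 1; ext i; ring)

theorem qForm_apply (a τ : ι → K) (lam : K) (u v : ι → K) :
    qForm a τ lam u v = ∑ i, τ i * u i * v i / (lam - τ i * a i) := rfl

theorem qForm_isSymm (a τ : ι → K) (lam : K) : (qForm a τ lam).IsSymm :=
  ⟨fun u v => sum_congr rfl fun i _ => by ring⟩

/-- Coordinatewise this is `λ / (a (λ - τ a)) = 1 / a + τ / (λ - τ a)`, once `τ² = 1` has
cancelled the two signs. -/
theorem lam_mul_qForm_apply {a τ : ι → K} {lam : K} (ha : ∀ i, a i ≠ 0)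
    (hτ : ∀ i, τ i ^ 2 = 1) (hlam : ∀ i, lam ≠ τ i * a i) (x u : ι → K) :
    lam * qForm a τ lam u (fun i => τ i * x i / a i) = invForm a x u + qForm a τ lam x u := by
  simp only [qForm_apply, invForm_apply, mul_sum, ← sum_add_distrib]
  refine sum_congr rfl fun i _ => ?_
  have hi := sub_ne_zero_of_ne (hlam i)
  field_simp [ha i]
  linear_combination (lam * u i * x i) * hτ i

end Quadric

theorem billiard_detL_invariant_general
    (n : ℕ) (a τ : Fin n → ℝ) (ha : ∀ i, a i ≠ 0)
    (hτ : ∀ i, τ i = 1 ∨ τ i = -1)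
    (x y x' y' : Fin n → ℝ)
    (hx' : ∑ i, x' i * x' i / a i = 1)
    (hE : ∑ i, τ i * x' i * x' i / (a i * a i) ≠ 0)
    (hstep1 : ∀ i, x' i =
      x i - 2 * ((∑ j, x j * y j / a j) / (∑ j, y j * y j / a j)) * y i)
    (hstep2 : ∀ i, y' i =
      y i + 2 * ((∑ j, x' j * y' j / a j) / (∑ j, τ j * x' j * x' j / (a j * a j)))
        * (τ i * x' i / a i)) :
    ∀ lam : ℝ, (∀ i, lam ≠ τ i * a i) →
      (∑ i, τ i * y' i * y' i / (lam - τ i * a i)) *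
          (1 + ∑ i, τ i * x' i * x' i / (lam - τ i * a i)) -
        (∑ i, τ i * x' i * y' i / (lam - τ i * a i)) ^ 2 =
      (∑ i, τ i * y i * y i / (lam - τ i * a i)) *
          (1 + ∑ i, τ i * x i * x i / (lam - τ i * a i)) -
        (∑ i, τ i * x i * y i / (lam - τ i * a i)) ^ 2 := by
  intro lam hlam
  set w : Fin n → ℝ := fun i => τ i * x' i / a i
  have hS : invForm a x' w = ∑ i, τ i * x' i * x' i / (a i * a i) :=
    (invForm_apply a x' w).trans (sum_congr rfl fun i _ => by simp only [w]; ring)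
  have hx'_eq : x' = x - (2 * (invForm a x y / invForm a y y)) • y :=
    funext fun i => by simp only [hstep1 i, Pi.sub_apply, Pi.smul_apply, smul_eq_mul]; rfl
  have hy'_eq : y' = y + (2 * (invForm a x' y' / invForm a x' w)) • w :=
    funext fun i => by rw [hS]; simp only [hstep2 i, Pi.add_apply, Pi.smul_apply, smul_eq_mul]; rfl
  have hreflect : invForm a x' y + invForm a x' y' = 0 :=
    (invForm a x').apply_add_apply_eq_zero_of_eq_add_smul (hS ▸ hE) hy'_eq
  have hτ_sq (i : Fin n) : τ i ^ 2 = 1 := (sq (τ i)).trans (mul_self_eq_one_iff.mpr (hτ i))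
  have hres := lam_mul_qForm_apply ha hτ_sq hlam x'
  have hdet := laxDet_add_smul (qForm_isSymm a τ lam) (invForm a x') hres hx' y
    (2 * (invForm a x' y' / invForm a x' w))
  rw [← hy'_eq, hreflect, mul_zero, add_zero] at hdet
  change laxDet (qForm a τ lam) x' y' = laxDet (qForm a τ lam) x y
  rw [hdet, hx'_eq, laxDet_sub_smul (qForm_isSymm a τ lam)]

/-- `det L_{x,y}(λ) = q_λ(y,y)(1+q_λ(x,x)) - q_λ(x,y)²` is an invariant of the
billiard map, for all admissible `λ`. -/
theorem billiard_detL_invariant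
    (n : ℕ) (a τ : Fin n → ℝ) (ha : ∀ i, a i ≠ 0)
    (hτ : ∀ i, τ i = 1 ∨ τ i = -1)
    (x y x' y' : Fin n → ℝ)
    (hx : ∑ i, x i * x i / a i = 1)
    (hx' : ∑ i, x' i * x' i / a i = 1)
    (hyy : ∑ i, y i * y i / a i ≠ 0)
    (hE : ∑ i, τ i * x' i * x' i / (a i * a i) ≠ 0)
    (hstep1 : ∀ i, x' i =
      x i - 2 * ((∑ j, x j * y j / a j) / (∑ j, y j * y j / a j)) * y i)
    (hstep2 : ∀ i, y' i =
      y i + 2 * ((∑ j, x' j * y' j / a j) / (∑ j, τ j * x' j * x' j / (a j * a j)))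
        * (τ i * x' i / a i)) :
    ∀ lam : ℝ, (∀ i, lam ≠ τ i * a i) →
      (∑ i, τ i * y' i * y' i / (lam - τ i * a i)) *
          (1 + ∑ i, τ i * x' i * x' i / (lam - τ i * a i)) -
        (∑ i, τ i * x' i * y' i / (lam - τ i * a i)) ^ 2 =
      (∑ i, τ i * y i * y i / (lam - τ i * a i)) *
          (1 + ∑ i, τ i * x i * x i / (lam - τ i * a i)) -
        (∑ i, τ i * x i * y i / (lam - τ i * a i)) ^ 2 :=
  billiard_detL_invariant_general n a τ ha hτ x y x' y' hx' hE hstep1 hstep2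
end

section
/- The momentum map components Φ_{s,ij} = y_i x_j - x_i y_j for i,j ∈ I_s are integrals of the billiard map: if (x', y') is the billiard image of (x, y), then y'_i x'_j - x'_i y'_j = y_i x_j - x_i y_j for all i, j in the same symmetry block I_s. -/
open Finset

/-!
Each half-step of the billiard map is a shear of the phase pair `(x, y)`: the reflection adds
a multiple of `y` to `x`, and on a block `I_s` the velocity update adds one common multiple of
`x'` to `y`, because `τ_k / a_k` is constant there. A `2 × 2` minor of the pair is unchanged by
such shears.
-/

def momentum {ι R : Type*} [CommRing R] (x y : ι → R) (i j : ι) : R :=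
  y i * x j - x i * y j

section Shear

variable {ι R : Type*} [CommRing R] {x x' y y' : ι → R} {c : R} {i j : ι}

theorem momentum_eq_of_shear_fst (hi : x' i = x i + c * y i) (hj : x' j = x j + c * y j) :
    momentum x' y i j = momentum x y i j := by
  simp only [momentum, hi, hj]
  ring

theorem momentum_eq_of_shear_snd (hi : y' i = y i + c * x i) (hj : y' j = y j + c * x j) :
    momentum x y' i j = momentum x y i j := by
  simp only [momentum, hi, hj]
  ring

end Shear

theorem billiard_momentum_invariant_general
    (n : ℕ) (a τ : Fin n → ℝ)
    (x y x' y' : Fin n → ℝ)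
    (hstep1 : ∀ i, x' i =
      x i - 2 * ((∑ j, x j * y j / a j) / (∑ j, y j * y j / a j)) * y i)
    (hstep2 : ∀ i, y' i =
      y i + 2 * ((∑ j, x' j * y' j / a j) / (∑ j, τ j * x' j * x' j / (a j * a j)))
        * (τ i * x' i / a i))
    (i j : Fin n) (haij : a i = a j) (hτij : τ i = τ j) :
    y' i * x' j - x' i * y' j = y i * x j - x i * y j := by
  set μ := 2 * ((∑ j, x j * y j / a j) / (∑ j, y j * y j / a j))
  set ν := 2 * ((∑ j, x' j * y' j / a j) / (∑ j, τ j * x' j * x' j / (a j * a j)))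
  have hx' : ∀ k, x' k = x k + -μ * y k := fun k => by rw [hstep1]; ring
  have hy'i : y' i = y i + ν * τ i / a i * x' i := by rw [hstep2]; ring
  have hy'j : y' j = y j + ν * τ i / a i * x' j := by rw [hstep2, haij, hτij]; ring
  calc momentum x' y' i j = momentum x' y i j := momentum_eq_of_shear_snd hy'i hy'j
    _ = momentum x y i j := momentum_eq_of_shear_fst (hx' i) (hx' j)

/-- The momentum map components `Φ_{s,ij} = y_i x_j - x_i y_j` (for `i, j` in
the same symmetry block, i.e. `a_i = a_j`, `τ_i = τ_j`) are integrals of the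
billiard map. -/
theorem billiard_momentum_invariant
    (n : ℕ) (a τ : Fin n → ℝ) (ha : ∀ i, a i ≠ 0)
    (hτ : ∀ i, τ i = 1 ∨ τ i = -1)
    (x y x' y' : Fin n → ℝ)
    (hx : ∑ i, x i * x i / a i = 1)
    (hx' : ∑ i, x' i * x' i / a i = 1)
    (hyy : ∑ i, y i * y i / a i ≠ 0)
    (hE : ∑ i, τ i * x' i * x' i / (a i * a i) ≠ 0)
    (hstep1 : ∀ i, x' i =
      x i - 2 * ((∑ j, x j * y j / a j) / (∑ j, y j * y j / a j)) * y i)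
    (hstep2 : ∀ i, y' i =
      y i + 2 * ((∑ j, x' j * y' j / a j) / (∑ j, τ j * x' j * x' j / (a j * a j)))
        * (τ i * x' i / a i))
    (i j : Fin n) (haij : a i = a j) (hτij : τ i = τ j) :
    y' i * x' j - x' i * y' j = y i * x j - x i * y j :=
  billiard_momentum_invariant_general n a τ x y x' y' hstep1 hstep2 i j haij hτij
end

section
/- The functions Φ_{s,ij} = y_i x_j - x_i y_j (i, j ∈ I_s) are constant along the geodesic flow ẋ = y, ẏ = -((A⁻¹y,y)/(EA⁻²x,x))EA⁻¹x on a symmetric quadric, provided a_i = a_j and τ_i = τ_j for i, j ∈ I_s. -/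
theorem hasDerivAt_angularMomentum_of_central {u v p q k : ℝ → ℝ} {t : ℝ}
    (hu : HasDerivAt u (p t) t) (hv : HasDerivAt v (q t) t)
    (hp : HasDerivAt p (k t * u t) t) (hq : HasDerivAt q (k t * v t) t) :
    HasDerivAt (fun s => p s * v s - u s * q s) 0 t :=
  ((hp.mul hv).sub (hu.mul hq)).congr_deriv (by ring)

theorem angularMomentum_eq_of_central {u v p q k : ℝ → ℝ}
    (hu : ∀ t, HasDerivAt u (p t) t) (hv : ∀ t, HasDerivAt v (q t) t)
    (hp : ∀ t, HasDerivAt p (k t * u t) t) (hq : ∀ t, HasDerivAt q (k t * v t) t)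
    (t₁ t₂ : ℝ) :
    p t₁ * v t₁ - u t₁ * q t₁ = p t₂ * v t₂ - u t₂ * q t₂ := by
  have hderiv t := hasDerivAt_angularMomentum_of_central (hu t) (hv t) (hp t) (hq t)
  exact is_const_of_deriv_eq_zero (fun t => (hderiv t).differentiableAt)
    (fun t => (hderiv t).deriv) t₁ t₂

theorem geodesic_momentum_invariant_general
    (n : ℕ) (a τ : Fin n → ℝ)
    (x y : ℝ → Fin n → ℝ) (μ : ℝ → ℝ)
    (hdx : ∀ t i, HasDerivAt (fun s => x s i) (y t i) t)
    (hdy : ∀ t i, HasDerivAt (fun s => y s i) (μ t * (τ i * x t i / a i)) t)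
    (i j : Fin n) (haij : a i = a j) (hτij : τ i = τ j) :
    ∀ t₁ t₂ : ℝ,
      y t₁ i * x t₁ j - x t₁ i * y t₁ j = y t₂ i * x t₂ j - x t₂ i * y t₂ j := by
  -- On the block `a i = a j`, `τ i = τ j` the force `μ τ x / a` is central in the `(i, j)` plane.
  have hcentral : ∀ t k, k = i ∨ k = j →
      HasDerivAt (fun s => y s k) (μ t * (τ i / a i) * x t k) t := by
    rintro t k (rfl | rfl)
    · exact (hdy t k).congr_deriv (by ring)
    · exact (hdy t k).congr_deriv (by rw [haij, hτij]; ring)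
  exact angularMomentum_eq_of_central (fun t => hdx t i) (fun t => hdx t j)
    (fun t => hcentral t i (.inl rfl)) (fun t => hcentral t j (.inr rfl))

/-- The functions `Φ_{s,ij} = y_i x_j - x_i y_j` (for `i, j` in the same
symmetry block) are constant along the geodesic flow on a symmetric quadric. -/
theorem geodesic_momentum_invariant
    (n : ℕ) (a τ : Fin n → ℝ) (ha : ∀ i, a i ≠ 0)
    (hτ : ∀ i, τ i = 1 ∨ τ i = -1)
    (x y : ℝ → Fin n → ℝ) (μ : ℝ → ℝ)
    (hμ : ∀ t, μ t = -(∑ i, y t i * y t i / a i) /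
      (∑ i, τ i * x t i * x t i / (a i * a i)))
    (hsing : ∀ t, ∑ i, τ i * x t i * x t i / (a i * a i) ≠ 0)
    (hc1 : ∀ t, ∑ i, x t i * x t i / a i = 1)
    (hc2 : ∀ t, ∑ i, x t i * y t i / a i = 0)
    (hdx : ∀ t i, HasDerivAt (fun s => x s i) (y t i) t)
    (hdy : ∀ t i, HasDerivAt (fun s => y s i) (μ t * (τ i * x t i / a i)) t)
    (i j : Fin n) (haij : a i = a j) (hτij : τ i = τ j) :
    ∀ t₁ t₂ : ℝ,
      y t₁ i * x t₁ j - x t₁ i * y t₁ j = y t₂ i * x t₂ j - x t₂ i * y t₂ j :=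
  geodesic_momentum_invariant_general n a τ x y μ hdx hdy i j haij hτij
end

section
/- Poisson commutativity of f_i: the functions f_i(x,y) = τ_i y_i² + Σ_{j≠i}(x_i y_j - x_j y_i)²/(τ_j a_i - τ_i a_j) pairwise commute with respect to the pseudo-Euclidean canonical Poisson bracket {f,g} = Σ_i τ_i(∂f/∂x_i · ∂g/∂y_i - ∂f/∂y_i · ∂g/∂x_i) on the constraint submanifold — more precisely, for i ≠ j, the canonical bracket {f_i, f_j} vanishes whenever (A⁻¹x,y) = 0. -/
open Finset

/-!
Write `L_ij = x_i y_j - x_j y_i` and `D_ij = τ_j a_i - τ_i a_j`, so that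
`f_i = τ_i y_i² + Σ_m L_im² / D_im`. Since `L` is bilinear in `(x, y)`, the partial derivatives
of `f_i` are explicit; only those in `x_i` and `y_i` are sums. Splitting `{f_i, f_j}` into the
terms `k = i`, `k = j` and `k ∉ {i, j}`, the `y_i y_j` contributions cancel because
`τ_i² = τ_j²`, and the rest is `Σ_m 4 L_ij L_im L_jm (τ_i / (D_ij D_im) - τ_j / (D_ij D_jm)
+ τ_m / (D_im D_jm))`, whose summands vanish by the cyclic identity
`τ_i D_jm - τ_j D_im + τ_m D_ij = 0`.
-/

namespace PseudoEuclidean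

open Function

lemma hasDerivAt_sq_affine (u v t₀ : ℝ) :
    HasDerivAt (fun t => (u + (t - t₀) * v) ^ 2) (2 * u * v) t₀ :=
  ((((hasDerivAt_id t₀).sub_const t₀).mul_const v).const_add u).fun_pow 2
    |>.congr_deriv (by simp)

variable {ι : Type*}

def angMom (x y : ι → ℝ) (i j : ι) : ℝ := x i * y j - x j * y i

def denom (τ a : ι → ℝ) (i j : ι) : ℝ := τ j * a i - τ i * a j

@[simp] lemma angMom_self (x y : ι → ℝ) (i : ι) : angMom x y i i = 0 := sub_self _

lemma angMom_swap (x y : ι → ℝ) (i j : ι) : angMom x y j i = -angMom x y i j := by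
  unfold angMom; ring

lemma denom_swap (τ a : ι → ℝ) (i j : ι) : denom τ a j i = -denom τ a i j := by
  unfold denom; ring

lemma denom_eq_mul_sub {τ : ι → ℝ} (a : ι → ℝ) {p q : ι} (hp : τ p ^ 2 = 1) (hq : τ q ^ 2 = 1) :
    denom τ a p q = τ p * τ q * (τ p * a p - τ q * a q) := by
  unfold denom; linear_combination (-(τ q * a p) * hp + τ p * a q * hq)

lemma denom_ne_zero {τ a : ι → ℝ} (hτ : ∀ p, τ p ^ 2 = 1)
    (hdist : ∀ p q, p ≠ q → τ p * a p ≠ τ q * a q) {p q : ι} (hpq : p ≠ q) :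
    denom τ a p q ≠ 0 := by
  have hτ0 : ∀ p, τ p ≠ 0 := fun p h => by simpa [h] using hτ p
  rw [denom_eq_mul_sub a (hτ p) (hτ q)]
  exact mul_ne_zero (mul_ne_zero (hτ0 p) (hτ0 q)) (sub_ne_zero.mpr (hdist p q hpq))

-- Laplace expansion of the vanishing determinant with rows `τ, a, τ` and columns `i, j, m`.
lemma denom_cyclic (τ a : ι → ℝ) (i j m : ι) :
    τ i * denom τ a j m - τ j * denom τ a i m + τ m * denom τ a i j = 0 := by
  unfold denom; ring

lemma angMom_mul_tau_div_denom_cyclic {τ a : ι → ℝ}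
    (hden : ∀ p q, p ≠ q → denom τ a p q ≠ 0) (x y : ι → ℝ) {i j : ι} (hij : i ≠ j) (m : ι) :
    angMom x y i m * angMom x y j m * (τ i / (denom τ a i j * denom τ a i m)
      - τ j / (denom τ a i j * denom τ a j m) + τ m / (denom τ a i m * denom τ a j m)) = 0 := by
  rcases eq_or_ne m i with rfl | hmi
  · simp
  rcases eq_or_ne m j with rfl | hmj
  · simp
  have hij' := hden i j hij
  have him := hden i m hmi.symm
  have hjm := hden j m hmj.symm
  field_simp
  linear_combination angMom x y i m * angMom x y j m * denom_cyclic τ a i j m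

section update

variable [DecidableEq ι]

lemma update_eq_add_mul_single (v : ι → ℝ) (k : ι) (t : ℝ) (p : ι) :
    update v k t p = v p + (t - v k) * (Pi.single k 1 : ι → ℝ) p := by
  rcases eq_or_ne p k with rfl | hpk <;> simp [*]

lemma angMom_update_left (x y : ι → ℝ) (k : ι) (t : ℝ) (i m : ι) :
    angMom (update x k t) y i m = angMom x y i m + (t - x k) * angMom (Pi.single k 1) y i m := by
  simp only [angMom, update_eq_add_mul_single x k t]; ring

lemma angMom_update_right (x y : ι → ℝ) (k : ι) (t : ℝ) (i m : ι) :
    angMom x (update y k t) i m = angMom x y i m + (t - y k) * angMom x (Pi.single k 1) i m := by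
  simp only [angMom, update_eq_add_mul_single y k t]; ring

noncomputable def partialX (F : (ι → ℝ) → (ι → ℝ) → ℝ) (k : ι) (x y : ι → ℝ) : ℝ :=
  deriv (fun t => F (update x k t) y) (x k)

noncomputable def partialY (F : (ι → ℝ) → (ι → ℝ) → ℝ) (k : ι) (x y : ι → ℝ) : ℝ :=
  deriv (fun t => F x (update y k t)) (y k)

noncomputable def poissonTerm (τ : ι → ℝ) (F G : (ι → ℝ) → (ι → ℝ) → ℝ) (k : ι) (x y : ι → ℝ) : ℝ :=
  τ k * (partialX F k x y * partialY G k x y - partialY F k x y * partialX G k x y)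

lemma poissonTerm_swap (τ : ι → ℝ) (F G : (ι → ℝ) → (ι → ℝ) → ℝ) (k : ι) (x y : ι → ℝ) :
    poissonTerm τ G F k x y = -poissonTerm τ F G k x y := by
  unfold poissonTerm; ring

end update

variable [Fintype ι]

/-- The `m = i` summand is `0 ^ 2 / 0 = 0`, so summing over all `m` gives the paper's
`Σ_{m ≠ i}`. -/
noncomputable def integral (τ a : ι → ℝ) (i : ι) (x y : ι → ℝ) : ℝ :=
  τ i * y i ^ 2 + ∑ m, angMom x y i m ^ 2 / denom τ a i m

variable [DecidableEq ι]

noncomputable def poissonBracket (τ : ι → ℝ) (F G : (ι → ℝ) → (ι → ℝ) → ℝ) (x y : ι → ℝ) : ℝ :=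
  ∑ k, poissonTerm τ F G k x y

lemma sum_erase_eq_integral (τ a : ι → ℝ) (i : ι) (x y : ι → ℝ) :
    τ i * y i ^ 2 + ∑ m ∈ univ.erase i, (x i * y m - x m * y i) ^ 2 / (τ m * a i - τ i * a m)
      = integral τ a i x y := by
  rw [integral, sum_erase univ (by simp)]
  rfl

section derivatives

variable (τ a : ι → ℝ) (x y : ι → ℝ)

lemma hasDerivAt_integral_update_left (i k : ι) :
    HasDerivAt (fun t => integral τ a i (update x k t) y)
      (∑ m, 2 * angMom x y i m * angMom (Pi.single k 1) y i m / denom τ a i m) (x k) := by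
  simp only [integral, angMom_update_left]
  exact (HasDerivAt.fun_sum fun m _ =>
    (hasDerivAt_sq_affine _ _ _).div_const (denom τ a i m)).const_add (τ i * y i ^ 2)

lemma hasDerivAt_integral_update_right (i k : ι) :
    HasDerivAt (fun t => integral τ a i x (update y k t))
      (2 * τ i * y i * (Pi.single k 1 : ι → ℝ) i
        + ∑ m, 2 * angMom x y i m * angMom x (Pi.single k 1) i m / denom τ a i m) (y k) := by
  simp only [integral, angMom_update_right, update_eq_add_mul_single y k _ i]
  have := ((hasDerivAt_sq_affine (y i) ((Pi.single k 1 : ι → ℝ) i) (y k)).const_mul (τ i)).fun_add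
    (HasDerivAt.fun_sum (u := univ) fun m _ =>
      (hasDerivAt_sq_affine (angMom x y i m) (angMom x (Pi.single k 1) i m) (y k)).div_const
        (denom τ a i m))
  exact this.congr_deriv (by ring)

lemma partialX_integral_self (i : ι) :
    partialX (integral τ a i) i x y = 2 * ∑ m, angMom x y i m * y m / denom τ a i m := by
  rw [partialX, (hasDerivAt_integral_update_left τ a x y i i).deriv, mul_sum]
  refine sum_congr rfl fun m _ => ?_
  rcases eq_or_ne m i with rfl | hmi
  · simp
  · simp only [angMom, Pi.single_eq_same, Pi.single_eq_of_ne hmi]; ring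

lemma partialY_integral_self (i : ι) :
    partialY (integral τ a i) i x y
      = 2 * τ i * y i - 2 * ∑ m, angMom x y i m * x m / denom τ a i m := by
  rw [partialY, (hasDerivAt_integral_update_right τ a x y i i).deriv, mul_sum, sub_eq_add_neg,
    ← sum_neg_distrib, Pi.single_eq_same, mul_one]
  congr 1
  refine sum_congr rfl fun m _ => ?_
  rcases eq_or_ne m i with rfl | hmi
  · simp
  · simp only [angMom, Pi.single_eq_same, Pi.single_eq_of_ne hmi]; ring

lemma partialX_integral_of_ne {i k : ι} (hki : k ≠ i) :
    partialX (integral τ a i) k x y = -2 * angMom x y i k * y i / denom τ a i k := by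
  rw [partialX, (hasDerivAt_integral_update_left τ a x y i k).deriv,
    Fintype.sum_eq_single k fun m hmk => by simp [angMom, hki.symm, hmk]]
  simp [angMom, hki.symm]

lemma partialY_integral_of_ne {i k : ι} (hki : k ≠ i) :
    partialY (integral τ a i) k x y = 2 * angMom x y i k * x i / denom τ a i k := by
  rw [partialY, (hasDerivAt_integral_update_right τ a x y i k).deriv,
    Fintype.sum_eq_single k fun m hmk => by simp [angMom, hki.symm, hmk]]
  simp [angMom, hki.symm]

end derivatives

section bracket

variable {τ : ι → ℝ} (a : ι → ℝ) (x y : ι → ℝ) {i j k : ι}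

lemma poissonTerm_integral_of_ne (hki : k ≠ i) (hkj : k ≠ j) :
    poissonTerm τ (integral τ a i) (integral τ a j) k x y
      = 4 * τ k * angMom x y i j * angMom x y i k * angMom x y j k
          / (denom τ a i k * denom τ a j k) := by
  rw [poissonTerm, partialX_integral_of_ne τ a x y hki, partialY_integral_of_ne τ a x y hki,
    partialX_integral_of_ne τ a x y hkj, partialY_integral_of_ne τ a x y hkj]
  unfold angMom; ring

lemma poissonTerm_integral_self (hij : i ≠ j) :
    poissonTerm τ (integral τ a i) (integral τ a j) i x y
      = 4 * τ i * angMom x y i j / denom τ a i j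
          * (∑ m, angMom x y i m * angMom x y j m / denom τ a i m + τ i * y i * y j) := by
  have hsum : ∑ m, angMom x y i m * angMom x y j m / denom τ a i m
      = x j * ∑ m, angMom x y i m * y m / denom τ a i m
        - y j * ∑ m, angMom x y i m * x m / denom τ a i m := by
    rw [mul_sum, mul_sum, ← sum_sub_distrib]
    exact sum_congr rfl fun m _ => by unfold angMom; ring
  rw [poissonTerm, partialX_integral_self, partialY_integral_self,
    partialX_integral_of_ne τ a x y hij, partialY_integral_of_ne τ a x y hij, hsum,
    angMom_swap x y i j, denom_swap τ a i j]
  ring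

lemma poissonBracket_integral_eq (hij : i ≠ j) :
    poissonBracket τ (integral τ a i) (integral τ a j) x y
      = 4 * angMom x y i j / denom τ a i j
          * (τ i * ∑ m, angMom x y i m * angMom x y j m / denom τ a i m
            - τ j * ∑ m, angMom x y j m * angMom x y i m / denom τ a j m
            + (τ i ^ 2 - τ j ^ 2) * y i * y j)
        + ∑ k, 4 * τ k * angMom x y i j * angMom x y i k * angMom x y j k
          / (denom τ a i k * denom τ a j k) := by
  set g : ι → ℝ := fun k => 4 * τ k * angMom x y i j * angMom x y i k * angMom x y j k
    / (denom τ a i k * denom τ a j k)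
  have hsplit := Fintype.sum_eq_add i j hij
    (f := fun k => poissonTerm τ (integral τ a i) (integral τ a j) k x y - g k)
    fun k ⟨hki, hkj⟩ => sub_eq_zero.mpr (poissonTerm_integral_of_ne a x y hki hkj)
  have hgi : g i = 0 := by simp [g]
  have hgj : g j = 0 := by simp [g]
  rw [sum_sub_distrib, poissonTerm_swap τ (integral τ a j) (integral τ a i) j x y,
    poissonTerm_integral_self a x y hij.symm, poissonTerm_integral_self a x y hij,
    angMom_swap x y i j, denom_swap τ a i j] at hsplit
  rw [poissonBracket]
  linear_combination hsplit - hgi - hgj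

theorem poissonBracket_integral (hτ : τ i ^ 2 = τ j ^ 2)
    (hden : ∀ p q, p ≠ q → denom τ a p q ≠ 0) (hij : i ≠ j) :
    poissonBracket τ (integral τ a i) (integral τ a j) x y = 0 := by
  rw [poissonBracket_integral_eq a x y hij, hτ, sub_self, zero_mul, zero_mul, add_zero]
  calc _ = ∑ m, 4 * angMom x y i j * (angMom x y i m * angMom x y j m
          * (τ i / (denom τ a i j * denom τ a i m) - τ j / (denom τ a i j * denom τ a j m)
            + τ m / (denom τ a i m * denom τ a j m))) := by
        rw [mul_sum, mul_sum, ← sum_sub_distrib, mul_sum, ← sum_add_distrib]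
        exact sum_congr rfl fun m _ => by ring
    _ = 0 := sum_eq_zero fun m _ => by
        rw [angMom_mul_tau_div_denom_cyclic hden x y hij, mul_zero]

end bracket

end PseudoEuclidean

theorem integrals_poisson_commute_general
    (n : ℕ) (a τ : Fin n → ℝ)
    (hτ : ∀ i, τ i = 1 ∨ τ i = -1)
    (hdist : ∀ i j, i ≠ j → τ i * a i ≠ τ j * a j)
    (f : Fin n → (Fin n → ℝ) → (Fin n → ℝ) → ℝ)
    (hf : ∀ i x y, f i x y = τ i * y i ^ 2 +
      ∑ j ∈ univ.erase i, (x i * y j - x j * y i) ^ 2 / (τ j * a i - τ i * a j))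
    (pdx pdy : ((Fin n → ℝ) → (Fin n → ℝ) → ℝ) →
      Fin n → (Fin n → ℝ) → (Fin n → ℝ) → ℝ)
    (hpdx : ∀ F k x y, pdx F k x y = deriv (fun t => F (Function.update x k t) y) (x k))
    (hpdy : ∀ F k x y, pdy F k x y = deriv (fun t => F x (Function.update y k t)) (y k))
    (i j : Fin n) (hij : i ≠ j)
    (x y : Fin n → ℝ) :
    ∑ k, τ k * (pdx (f i) k x y * pdy (f j) k x y -
      pdy (f i) k x y * pdx (f j) k x y) = 0 := by
  have hf' : ∀ p, f p = PseudoEuclidean.integral τ a p := fun p => by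
    ext x y
    rw [hf, PseudoEuclidean.sum_erase_eq_integral]
  have hτ' : ∀ p, τ p ^ 2 = 1 := fun p => by rcases hτ p with h | h <;> simp [h]
  simpa only [PseudoEuclidean.poissonBracket, PseudoEuclidean.poissonTerm,
    PseudoEuclidean.partialX, PseudoEuclidean.partialY, hpdx, hpdy, hf']
    using PseudoEuclidean.poissonBracket_integral a x y (by rw [hτ' i, hτ' j])
      (fun p q => PseudoEuclidean.denom_ne_zero hτ' hdist) hij

/-- Poisson commutativity of the integrals `f_i` with respect to the
pseudo-Euclidean canonical bracket
`{f,g} = Σ_k τ_k (∂f/∂x_k ∂g/∂y_k - ∂f/∂y_k ∂g/∂x_k)`,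
on the constraint `(A⁻¹x, y) = 0`. -/
theorem integrals_poisson_commute
    (n : ℕ) (a τ : Fin n → ℝ) (ha : ∀ i, a i ≠ 0)
    (hτ : ∀ i, τ i = 1 ∨ τ i = -1)
    (hdist : ∀ i j, i ≠ j → τ i * a i ≠ τ j * a j)
    (f : Fin n → (Fin n → ℝ) → (Fin n → ℝ) → ℝ)
    (hf : ∀ i x y, f i x y = τ i * y i ^ 2 +
      ∑ j ∈ univ.erase i, (x i * y j - x j * y i) ^ 2 / (τ j * a i - τ i * a j))
    (pdx pdy : ((Fin n → ℝ) → (Fin n → ℝ) → ℝ) →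
      Fin n → (Fin n → ℝ) → (Fin n → ℝ) → ℝ)
    (hpdx : ∀ F k x y, pdx F k x y = deriv (fun t => F (Function.update x k t) y) (x k))
    (hpdy : ∀ F k x y, pdy F k x y = deriv (fun t => F x (Function.update y k t)) (y k))
    (i j : Fin n) (hij : i ≠ j)
    (x y : Fin n → ℝ) (hcon : ∑ k, x k * y k / a k = 0) :
    ∑ k, τ k * (pdx (f i) k x y * pdy (f j) k x y -
      pdy (f i) k x y * pdx (f j) k x y) = 0 :=
  integrals_poisson_commute_general n a τ hτ hdist f hf pdx pdy hpdx hpdy i j hij x y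
end

section
/- If a line l_k determined by a billiard segment is tangent to a pseudo-confocal quadric Q_{λ*}, then all subsequent segments are tangent to Q_{λ*}: tangency, expressed as det L_{x_j,y_j}(λ*) = 0, propagates to all iterates of the billiard map. -/
/-!
For a symmetric bilinear form `q`, the quantity `D(x, y) = q(y, y) (1 + q(x, x)) - q(x, y)²`
does not change when `x` slides along the line `x + ℝ y`. For the pseudo-confocal form `q_λ`
and a point `x'` of the ellipsoid, the vector `N = E A⁻¹ x'` satisfies
`λ q_λ(u, N) = (A⁻¹ u, x') + q_λ(u, x')` for every `u`; this identity makes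
`D(x', y + s N) - D(x', y)` a multiple of `2 (A⁻¹ x', y) + s (A⁻¹ x', N)`, which vanishes
precisely when `y + s N` is the reflected direction. So both halves of a billiard step
preserve `D`, for every `λ`.
-/

open Finset

namespace LinearMap.BilinForm

variable {R M : Type*} [CommRing R] [AddCommGroup M] [Module R M]

def tangencyDet (B : LinearMap.BilinForm R M) (x y : M) : R :=
  B y y * (1 + B x x) - B x y ^ 2

variable {B : LinearMap.BilinForm R M}

theorem tangencyDet_sub_smul (hB : B.IsSymm) (x y : M) (t : R) :
    B.tangencyDet (x - t • y) y = B.tangencyDet x y := by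
  simp only [tangencyDet, map_sub, map_smul, LinearMap.sub_apply, LinearMap.smul_apply,
    smul_eq_mul, hB.eq y x]
  ring

theorem tangencyDet_add_smul_of_apply_normal (hB : B.IsSymm) {G : LinearMap.BilinForm R M}
    (hG : G.IsSymm) {x N : M} {l : R} (hN : ∀ u, l * B u N = G u x + B u x) (hx : G x x = 1)
    (y : M) (s : R) :
    B.tangencyDet x (y + s • N) = B.tangencyDet x y + s * (2 * G x y + s * G x N) * B x N := by
  have hxN := hN x
  have hyN := hN y
  have hNN := hN N
  rw [hG.eq N x, hB.eq N x] at hNN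
  rw [hG.eq y x, hB.eq y x] at hyN
  simp only [tangencyDet, map_add, map_smul, LinearMap.add_apply, LinearMap.smul_apply,
    smul_eq_mul, hB.eq N y]
  linear_combination -(2 * s * B y N + s ^ 2 * B N N) * (hxN + hx) + 2 * s * B x N * hyN
    + s ^ 2 * B x N * hNN

end LinearMap.BilinForm

theorem Matrix.toBilin'_diagonal_apply {ι R : Type*} [Fintype ι] [DecidableEq ι] [CommRing R]
    (w u v : ι → R) : Matrix.toBilin' (Matrix.diagonal w) u v = ∑ i, w i * u i * v i := by
  simp only [Matrix.toBilin'_apply', dotProduct, Matrix.mulVec_diagonal, mul_assoc, mul_left_comm]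

section Billiard

open LinearMap.BilinForm

variable {ι K : Type*} [Fintype ι] [DecidableEq ι] [Field K] (a τ : ι → K) (l : K)

def ellipsoidForm : LinearMap.BilinForm K (ι → K) :=
  Matrix.toBilin' (Matrix.diagonal fun i => (a i)⁻¹)

/-- `q_λ(u, v) = -((A - λE)⁻¹ u, v)` when `E = diag τ` with `τ i = ±1`. -/
def confocalForm : LinearMap.BilinForm K (ι → K) :=
  Matrix.toBilin' (Matrix.diagonal fun i => τ i / (l - τ i * a i))

theorem ellipsoidForm_apply (u v : ι → K) : ellipsoidForm a u v = ∑ i, u i * v i / a i := by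
  simp only [ellipsoidForm, Matrix.toBilin'_diagonal_apply]
  exact sum_congr rfl fun i _ => by ring

theorem confocalForm_apply (u v : ι → K) :
    confocalForm a τ l u v = ∑ i, τ i * u i * v i / (l - τ i * a i) := by
  simp only [confocalForm, Matrix.toBilin'_diagonal_apply]
  exact sum_congr rfl fun i _ => by ring

theorem ellipsoidForm_isSymm : (ellipsoidForm a).IsSymm :=
  Matrix.isSymm_toBilin'_iff_isSymm.mpr (Matrix.isSymm_diagonal _)

theorem confocalForm_isSymm : (confocalForm a τ l).IsSymm :=
  Matrix.isSymm_toBilin'_iff_isSymm.mpr (Matrix.isSymm_diagonal _)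

variable {a τ l}

theorem confocalForm_apply_normal (ha : ∀ i, a i ≠ 0) (hτ : ∀ i, τ i ^ 2 = 1)
    (hl : ∀ i, l - τ i * a i ≠ 0) (x u : ι → K) :
    l * confocalForm a τ l u (fun i => τ i * x i / a i) =
      ellipsoidForm a u x + confocalForm a τ l u x := by
  simp only [confocalForm_apply, ellipsoidForm_apply, mul_sum, ← sum_add_distrib]
  refine sum_congr rfl fun i _ => ?_
  field_simp [ha i, hl i]
  linear_combination l * u i * x i * hτ i


theorem confocalForm_tangencyDet_billiard_step (ha : ∀ i, a i ≠ 0) (hτ : ∀ i, τ i ^ 2 = 1)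
    (hl : ∀ i, l - τ i * a i ≠ 0) {x y x' y' : ι → K} {t : K}
    (hx'E : ∑ i, x' i * x' i / a i = 1) (hP : ∑ i, τ i * x' i * x' i / (a i * a i) ≠ 0)
    (hx' : ∀ i, x' i = x i - t * y i)
    (hy' : ∀ i, y' i = y i + 2 * ((∑ m, x' m * y' m / a m) /
      ∑ m, τ m * x' m * x' m / (a m * a m)) * (τ i * x' i / a i)) :
    (confocalForm a τ l).tangencyDet x' y' = (confocalForm a τ l).tangencyDet x y := by
  set G := ellipsoidForm a
  set N : ι → K := fun i => τ i * x' i / a i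
  set s := 2 * ((∑ m, x' m * y' m / a m) / ∑ m, τ m * x' m * x' m / (a m * a m))
  have hGN : G x' N = ∑ m, τ m * x' m * x' m / (a m * a m) := by
    rw [ellipsoidForm_apply]
    exact sum_congr rfl fun i _ => by ring
  have hx'_eq : x' = x - t • y := funext hx'
  have hy'_eq : y' = y + s • N := funext hy'
  have hs : s * G x' N = 2 * G x' y' := by
    rw [hGN, ellipsoidForm_apply, mul_assoc, div_mul_cancel₀ _ hP]
  have hreflect : 2 * G x' y + s * G x' N = 0 := by
    rw [hy'_eq, map_add, map_smul, smul_eq_mul] at hs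
    linear_combination -hs
  rw [hy'_eq, tangencyDet_add_smul_of_apply_normal (confocalForm_isSymm a τ l)
    (ellipsoidForm_isSymm a) (confocalForm_apply_normal ha hτ hl x')
    ((ellipsoidForm_apply a x' x').trans hx'E), hreflect, mul_zero, zero_mul, add_zero,
    hx'_eq, tangencyDet_sub_smul (confocalForm_isSymm a τ l)]

theorem confocalForm_tangencyDet (x y : ι → K) :
    (confocalForm a τ l).tangencyDet x y =
      (∑ i, τ i * y i * y i / (l - τ i * a i)) *
          (1 + ∑ i, τ i * x i * x i / (l - τ i * a i)) -
        (∑ i, τ i * x i * y i / (l - τ i * a i)) ^ 2 := by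
  simp only [tangencyDet, confocalForm_apply]

end Billiard

theorem billiard_tangency_propagates_general
    (n : ℕ) (a τ : Fin n → ℝ) (ha : ∀ i, 0 < a i)
    (hτ : ∀ i, τ i = 1 ∨ τ i = -1)
    (x y : ℕ → Fin n → ℝ)
    (hx : ∀ j, ∑ i, x j i * x j i / a i = 1)
    (hE : ∀ j, ∑ i, τ i * x j i * x j i / (a i * a i) ≠ 0)
    (hstep1 : ∀ j i, x (j + 1) i =
      x j i - 2 * ((∑ m, x j m * y j m / a m) / (∑ m, y j m * y j m / a m)) * y j i)
    (hstep2 : ∀ j i, y (j + 1) i =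
      y j i + 2 * ((∑ m, x (j + 1) m * y (j + 1) m / a m) /
        (∑ m, τ m * x (j + 1) m * x (j + 1) m / (a m * a m)))
        * (τ i * x (j + 1) i / a i))
    (lam : ℝ) (hlam : ∀ i, lam ≠ τ i * a i)
    (h0 : (∑ i, τ i * y 0 i * y 0 i / (lam - τ i * a i)) *
        (1 + ∑ i, τ i * x 0 i * x 0 i / (lam - τ i * a i)) -
      (∑ i, τ i * x 0 i * y 0 i / (lam - τ i * a i)) ^ 2 = 0) :
    ∀ j : ℕ, (∑ i, τ i * y j i * y j i / (lam - τ i * a i)) *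
        (1 + ∑ i, τ i * x j i * x j i / (lam - τ i * a i)) -
      (∑ i, τ i * x j i * y j i / (lam - τ i * a i)) ^ 2 = 0 := by
  have ha₀ : ∀ i, a i ≠ 0 := fun i => (ha i).ne'
  have hτ₂ : ∀ i, τ i ^ 2 = 1 := fun i => by rcases hτ i with h | h <;> simp [h]
  have hl : ∀ i, lam - τ i * a i ≠ 0 := fun i => sub_ne_zero.mpr (hlam i)
  have hconst : ∀ j, (confocalForm a τ lam).tangencyDet (x j) (y j) =
      (confocalForm a τ lam).tangencyDet (x 0) (y 0) := by
    intro j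
    induction j with
    | zero => rfl
    | succ j ih =>
      rw [confocalForm_tangencyDet_billiard_step ha₀ hτ₂ hl (hx (j + 1)) (hE (j + 1))
        (hstep1 j) (hstep2 j), ih]
  intro j
  rw [← confocalForm_tangencyDet, hconst, confocalForm_tangencyDet]
  exact h0

/-- Tangency to a fixed pseudo-confocal quadric `Q_{λ*}` (expressed as
`det L_{x_j,y_j}(λ*) = 0`) propagates from the initial segment to all iterates
of the billiard map within an ellipsoid. -/
theorem billiard_tangency_propagates
    (n : ℕ) (a τ : Fin n → ℝ) (ha : ∀ i, 0 < a i)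
    (hτ : ∀ i, τ i = 1 ∨ τ i = -1)
    (x y : ℕ → Fin n → ℝ)
    (hx : ∀ j, ∑ i, x j i * x j i / a i = 1)
    (hyy : ∀ j, ∑ i, y j i * y j i / a i ≠ 0)
    (hE : ∀ j, ∑ i, τ i * x j i * x j i / (a i * a i) ≠ 0)
    (hstep1 : ∀ j i, x (j + 1) i =
      x j i - 2 * ((∑ m, x j m * y j m / a m) / (∑ m, y j m * y j m / a m)) * y j i)
    (hstep2 : ∀ j i, y (j + 1) i =
      y j i + 2 * ((∑ m, x (j + 1) m * y (j + 1) m / a m) /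
        (∑ m, τ m * x (j + 1) m * x (j + 1) m / (a m * a m)))
        * (τ i * x (j + 1) i / a i))
    (lam : ℝ) (hlam : ∀ i, lam ≠ τ i * a i)
    (h0 : (∑ i, τ i * y 0 i * y 0 i / (lam - τ i * a i)) *
        (1 + ∑ i, τ i * x 0 i * x 0 i / (lam - τ i * a i)) -
      (∑ i, τ i * x 0 i * y 0 i / (lam - τ i * a i)) ^ 2 = 0) :
    ∀ j : ℕ, (∑ i, τ i * y j i * y j i / (lam - τ i * a i)) *
        (1 + ∑ i, τ i * x j i * x j i / (lam - τ i * a i)) -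
      (∑ i, τ i * x j i * y j i / (lam - τ i * a i)) ^ 2 = 0 :=
  billiard_tangency_propagates_general n a τ ha hτ x y hx hE hstep1 hstep2 lam hlam h0
end

section
/- The sum of block integrals gives the Hamiltonian: Σ_{s=1}^r f̃_s = ⟨y,y⟩ = Σ_i τ_i y_i², where f̃_s = Σ_{i∈I_s}(τ_i y_i² + Σ_{j∉I_s}(x_i y_j - x_j y_i)²/(τ_j a_i - τ_i a_j)). -/
/-! Grouping the outer sums by blocks turns the cross terms into a sum over ordered pairs `(i, j)`
in different blocks of `(x i y j - x j y i)² / (τ j a i - τ i a j)`. Exchanging `i` and `j` keeps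
the numerator and negates the denominator, so the pair terms cancel under the involution
`(i, j) ↦ (j, i)`, leaving `Σ τ i y i²`. -/

open Finset

theorem Finset.sum_fiberwise_apply {ι κ M : Type*} [Fintype κ] [DecidableEq κ] [AddCommMonoid M]
    (s : Finset ι) (g : ι → κ) (f : ι → κ → M) :
    ∑ j, ∑ i ∈ s with g i = j, f i j = ∑ i ∈ s, f i (g i) := by
  rw [← sum_fiberwise s g fun i => f i (g i)]
  exact sum_congr rfl fun j _ => sum_congr rfl fun i hi => by rw [(mem_filter.1 hi).2]

theorem Finset.sum_sum_filter_ne_eq_zero {ι κ M : Type*} [DecidableEq κ] [AddCommMonoid M]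
    (s : Finset ι) (b : ι → κ) (g : ι → ι → M) (hg : ∀ i j, g i j + g j i = 0) :
    ∑ i ∈ s, ∑ j ∈ s with b j ≠ b i, g i j = 0 := by
  rw [sum_sigma']
  refine sum_involution (fun p _ => ⟨p.2, p.1⟩) (fun p _ => hg _ _) ?_ ?_ (fun _ _ => rfl)
  · rintro ⟨i, j⟩ hp - h
    simp only [mem_sigma, mem_filter, Sigma.mk.injEq] at hp h
    exact hp.2.2 (congrArg b h.1)
  · rintro ⟨i, j⟩ hp
    simp only [mem_sigma, mem_filter] at hp ⊢
    exact ⟨hp.2.1, hp.1, Ne.symm hp.2.2⟩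

theorem sq_sub_div_add_swap_eq_zero {K : Type*} [Field K] (u v c d : K) :
    (u - v) ^ 2 / (c - d) + (v - u) ^ 2 / (d - c) = 0 := by
  rw [← neg_sub c d, div_neg, ← neg_sub u v, neg_sq, add_neg_cancel]

theorem sum_block_integrals_eq_hamiltonian_general
    (n r : ℕ) (a τ : Fin n → ℝ)
    (b : Fin n → Fin r)
    (x y : Fin n → ℝ) :
    ∑ s : Fin r,
      ∑ i ∈ univ.filter fun i => b i = s, (τ i * y i ^ 2 +
        ∑ j ∈ univ.filter fun j => b j ≠ s,
          (x i * y j - x j * y i) ^ 2 / (τ j * a i - τ i * a j)) =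
    ∑ i, τ i * y i ^ 2 := by
  rw [sum_fiberwise_apply univ b fun i s => τ i * y i ^ 2 +
      ∑ j ∈ univ with b j ≠ s, (x i * y j - x j * y i) ^ 2 / (τ j * a i - τ i * a j),
    sum_add_distrib,
    sum_sum_filter_ne_eq_zero univ b _ fun i j => sq_sub_div_add_swap_eq_zero _ _ _ _, add_zero]

/-- The sum of the block integrals gives the Hamiltonian:
`Σ_s f̃_s = ⟨y,y⟩ = Σ_i τ_i y_i²`. -/
theorem sum_block_integrals_eq_hamiltonian
    (n r : ℕ) (a τ : Fin n → ℝ) (ha : ∀ i, a i ≠ 0)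
    (hτ : ∀ i, τ i = 1 ∨ τ i = -1)
    (b : Fin n → Fin r) (α : Fin r → ℝ) (hα : Function.Injective α)
    (hblock : ∀ i, τ i * a i = α (b i))
    (x y : Fin n → ℝ) :
    ∑ s : Fin r,
      ∑ i ∈ univ.filter fun i => b i = s, (τ i * y i ^ 2 +
        ∑ j ∈ univ.filter fun j => b j ≠ s,
          (x i * y j - x j * y i) ^ 2 / (τ j * a i - τ i * a j)) =
    ∑ i, τ i * y i ^ 2 :=
  sum_block_integrals_eq_hamiltonian_general n r a τ b x y
end
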